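/- arXiv:1403.7956 — 9 statements merged into one kernel-verified Lean document; each statement's English description precedes it below -/
import Mathlib

section
/- For every integer n ≥ 2 there exists a packing of n horocycles in the hyperbolic plane with exactly 2n − 3 tangencies. Concretely: there exist c : Fin n → ℝ² and r : Fin n → ℝ with 0 < r i < 1, ‖c i‖ = 1 − r i for all i, ‖c i − c j‖ ≥ r i + r j for all i ≠ j, and such that the number of unordered pairs {i, j} with i ≠ j and ‖c i − c j‖ = r i + r j equals 2n − 3. -/
/-!
In the upper half-plane take the horocycle `y = 1` based at `∞` together with the horocycles of
Euclidean diameter `1` based at the integers `1, …, n - 1`. Each of the latter touches the first,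
consecutive ones touch, and the others are disjoint: `(n - 1) + (n - 2)` tangencies. The Cayley
transform sends `∞` to `(1, 0)` and `t` to `circlePoint t`, and these horocycles to the circles of
radius `1 / 2` and `1 / (t ^ 2 + 2)` below.

For horocycles based at unit vectors `ξ, η` with radii `r, s`, the centres are `(1 - r) • ξ` and
`(1 - s) • η`, and `‖(1 - r) • ξ - (1 - s) • η‖ ^ 2 - (r + s) ^ 2 = (1 - r) * (1 - s) * ‖ξ - η‖ ^ 2
- 4 * r * s`; for the horocycles at `t` and `u` this equals a positive multiple of
`(t - u) ^ 2 - 1`.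
-/

section Horocycle

variable {E : Type*} [NormedAddCommGroup E] [InnerProductSpace ℝ E] {ξ η : E} {r s : ℝ}

lemma norm_one_sub_smul_of_norm_eq_one (hξ : ‖ξ‖ = 1) (hr : r ≤ 1) : ‖(1 - r) • ξ‖ = 1 - r := by
  rw [norm_smul, hξ, mul_one, Real.norm_of_nonneg (sub_nonneg.2 hr)]

lemma norm_sub_smul_sq_sub_sq (hξ : ‖ξ‖ = 1) (hη : ‖η‖ = 1) :
    ‖(1 - r) • ξ - (1 - s) • η‖ ^ 2 - (r + s) ^ 2
      = (1 - r) * (1 - s) * ‖ξ - η‖ ^ 2 - 4 * r * s := by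
  rw [norm_sub_sq_real, norm_sub_sq_real, norm_smul, norm_smul, real_inner_smul_left,
    real_inner_smul_right, hξ, hη, Real.norm_eq_abs, Real.norm_eq_abs, mul_pow, mul_pow, sq_abs,
    sq_abs]
  ring

lemma add_le_norm_sub_smul_iff (hξ : ‖ξ‖ = 1) (hη : ‖η‖ = 1) (hr : 0 ≤ r) (hs : 0 ≤ s) :
    r + s ≤ ‖(1 - r) • ξ - (1 - s) • η‖ ↔ 4 * r * s ≤ (1 - r) * (1 - s) * ‖ξ - η‖ ^ 2 := by
  rw [← sq_le_sq₀ (by positivity) (norm_nonneg _), ← sub_nonneg, norm_sub_smul_sq_sub_sq hξ hη,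
    sub_nonneg]

lemma norm_sub_smul_eq_add_iff (hξ : ‖ξ‖ = 1) (hη : ‖η‖ = 1) (hr : 0 ≤ r) (hs : 0 ≤ s) :
    ‖(1 - r) • ξ - (1 - s) • η‖ = r + s ↔ (1 - r) * (1 - s) * ‖ξ - η‖ ^ 2 = 4 * r * s := by
  rw [← sq_eq_sq₀ (norm_nonneg _) (by positivity), ← sub_eq_zero, norm_sub_smul_sq_sub_sq hξ hη,
    sub_eq_zero]

end Horocycle

noncomputable def circlePoint (t : ℝ) : EuclideanSpace ℝ (Fin 2) :=
  !₂[(t ^ 2 - 1) / (t ^ 2 + 1), 2 * t / (t ^ 2 + 1)]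

lemma norm_circlePoint (t : ℝ) : ‖circlePoint t‖ = 1 := by
  have : 0 < t ^ 2 + 1 := by positivity
  rw [← pow_eq_one_iff_of_nonneg (norm_nonneg _) two_ne_zero, EuclideanSpace.real_norm_sq_eq]
  simp only [circlePoint, Fin.sum_univ_two, Fin.isValue, Matrix.cons_val_zero,
    Matrix.cons_val_one]
  field_simp
  ring

lemma norm_circlePoint_sub_sq (t u : ℝ) :
    ‖circlePoint t - circlePoint u‖ ^ 2 = 4 * (t - u) ^ 2 / ((t ^ 2 + 1) * (u ^ 2 + 1)) := by
  have : 0 < t ^ 2 + 1 := by positivity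
  have : 0 < u ^ 2 + 1 := by positivity
  rw [EuclideanSpace.real_norm_sq_eq]
  simp only [circlePoint, PiLp.sub_apply, Fin.sum_univ_two, Fin.isValue, Matrix.cons_val_zero,
    Matrix.cons_val_one]
  field_simp
  ring

lemma norm_sub_circlePoint_sq (t : ℝ) : ‖!₂[1, 0] - circlePoint t‖ ^ 2 = 4 / (t ^ 2 + 1) := by
  have : 0 < t ^ 2 + 1 := by positivity
  rw [EuclideanSpace.real_norm_sq_eq]
  simp only [circlePoint, PiLp.sub_apply, Fin.sum_univ_two, Fin.isValue, Matrix.cons_val_zero,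
    Matrix.cons_val_one, zero_sub, even_two, Even.neg_pow]
  field_simp
  ring

lemma circlePoint_gap (t u : ℝ) :
    (1 - 1 / (t ^ 2 + 2)) * (1 - 1 / (u ^ 2 + 2)) * ‖circlePoint t - circlePoint u‖ ^ 2
        - 4 * (1 / (t ^ 2 + 2)) * (1 / (u ^ 2 + 2))
      = 4 * ((t - u) ^ 2 - 1) / ((t ^ 2 + 2) * (u ^ 2 + 2)) := by
  have : 0 < t ^ 2 + 1 := by positivity
  have : 0 < u ^ 2 + 1 := by positivity
  rw [norm_circlePoint_sub_sq]
  field_simp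
  ring

lemma one_zero_circlePoint_gap (t : ℝ) :
    (1 - 1 / 2) * (1 - 1 / (t ^ 2 + 2)) * ‖!₂[1, 0] - circlePoint t‖ ^ 2
      = 4 * (1 / 2) * (1 / (t ^ 2 + 2)) := by
  have : 0 < t ^ 2 + 1 := by positivity
  rw [norm_sub_circlePoint_sq]
  field_simp
  ring

noncomputable def fanPoint (k : ℕ) : EuclideanSpace ℝ (Fin 2) :=
  if k = 0 then !₂[1, 0] else circlePoint k

noncomputable def fanRadius (k : ℕ) : ℝ :=
  if k = 0 then 1 / 2 else 1 / ((k : ℝ) ^ 2 + 2)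

noncomputable def fanCenter (k : ℕ) : EuclideanSpace ℝ (Fin 2) :=
  (1 - fanRadius k) • fanPoint k

lemma fanRadius_pos (k : ℕ) : 0 < fanRadius k := by
  unfold fanRadius; split_ifs <;> positivity

lemma fanRadius_lt_one (k : ℕ) : fanRadius k < 1 := by
  unfold fanRadius
  split_ifs
  · norm_num
  · rw [div_lt_one (by positivity)]; nlinarith [sq_nonneg (k : ℝ)]

lemma norm_fanPoint (k : ℕ) : ‖fanPoint k‖ = 1 := by
  unfold fanPoint; split_ifs
  · simp [EuclideanSpace.norm_eq]
  · exact norm_circlePoint _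

lemma norm_fanCenter (k : ℕ) : ‖fanCenter k‖ = 1 - fanRadius k :=
  norm_one_sub_smul_of_norm_eq_one (norm_fanPoint k) (fanRadius_lt_one k).le

lemma fan_gap {k l : ℕ} (h : k < l) :
    (1 - fanRadius k) * (1 - fanRadius l) * ‖fanPoint k - fanPoint l‖ ^ 2
        - 4 * fanRadius k * fanRadius l
      = if k = 0 then 0 else 4 * (((k : ℝ) - l) ^ 2 - 1) / ((k ^ 2 + 2) * (l ^ 2 + 2)) := by
  have hl : l ≠ 0 := by omega
  by_cases hk : k = 0
  · simp only [fanRadius, fanPoint, hk, hl, if_true, if_false, sub_eq_zero]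
    exact one_zero_circlePoint_gap l
  · simp only [fanRadius, fanPoint, hk, hl, if_false]
    exact circlePoint_gap k l

lemma fan_four_mul_le {k l : ℕ} (h : k < l) :
    4 * fanRadius k * fanRadius l
      ≤ (1 - fanRadius k) * (1 - fanRadius l) * ‖fanPoint k - fanPoint l‖ ^ 2 := by
  have hkl : (k : ℝ) + 1 ≤ l := by exact_mod_cast h
  rw [← sub_nonneg, fan_gap h]
  split_ifs
  · rfl
  · exact div_nonneg (by nlinarith) (by positivity)

lemma fan_eq_four_mul_iff {k l : ℕ} (h : k < l) :
    (1 - fanRadius k) * (1 - fanRadius l) * ‖fanPoint k - fanPoint l‖ ^ 2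
        = 4 * fanRadius k * fanRadius l ↔ k = 0 ∨ l = k + 1 := by
  have hkl : (k : ℝ) + 1 ≤ l := by exact_mod_cast h
  rw [← sub_eq_zero, fan_gap h]
  split_ifs with hk
  · simp [hk]
  · have : 0 < ((k : ℝ) ^ 2 + 2) * (l ^ 2 + 2) := by positivity
    rw [div_eq_zero_iff, or_iff_left this.ne']
    simp only [hk, false_or]
    constructor
    · intro h0
      have : (l : ℝ) = k + 1 := by nlinarith
      exact_mod_cast this
    · rintro rfl
      push_cast
      ring

lemma fanRadius_add_le_norm_fanCenter_sub {k l : ℕ} (h : k ≠ l) :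
    fanRadius k + fanRadius l ≤ ‖fanCenter k - fanCenter l‖ := by
  rcases h.lt_or_gt with h | h
  · exact (add_le_norm_sub_smul_iff (norm_fanPoint k) (norm_fanPoint l) (fanRadius_pos k).le
      (fanRadius_pos l).le).2 (fan_four_mul_le h)
  · rw [add_comm, norm_sub_rev]
    exact (add_le_norm_sub_smul_iff (norm_fanPoint l) (norm_fanPoint k) (fanRadius_pos l).le
      (fanRadius_pos k).le).2 (fan_four_mul_le h)

lemma norm_fanCenter_sub_eq_iff {k l : ℕ} (h : k < l) :
    ‖fanCenter k - fanCenter l‖ = fanRadius k + fanRadius l ↔ k = 0 ∨ l = k + 1 :=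
  (norm_sub_smul_eq_add_iff (norm_fanPoint k) (norm_fanPoint l) (fanRadius_pos k).le
    (fanRadius_pos l).le).trans (fan_eq_four_mul_iff h)

lemma ncard_fan_pairs {n : ℕ} (hn : 2 ≤ n) :
    {p : ℕ × ℕ | p.1 < p.2 ∧ p.2 < n ∧ (p.1 = 0 ∨ p.2 = p.1 + 1)}.ncard = 2 * n - 3 := by
  induction n, hn using Nat.le_induction with
  | base =>
    rw [show {p : ℕ × ℕ | p.1 < p.2 ∧ p.2 < 2 ∧ (p.1 = 0 ∨ p.2 = p.1 + 1)} = {(0, 1)} by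
      ext ⟨a, b⟩; simp only [Set.mem_ofPred_eq, Set.mem_singleton_iff, Prod.mk.injEq]; omega]
    exact Set.ncard_singleton _
  | succ n hn ih =>
    set S := {p : ℕ × ℕ | p.1 < p.2 ∧ p.2 < n ∧ (p.1 = 0 ∨ p.2 = p.1 + 1)}
    have hsplit : {p : ℕ × ℕ | p.1 < p.2 ∧ p.2 < n + 1 ∧ (p.1 = 0 ∨ p.2 = p.1 + 1)}
        = insert (0, n) (insert (n - 1, n) S) := by
      ext ⟨a, b⟩; simp only [S, Set.mem_ofPred_eq, Set.mem_insert_iff, Prod.mk.injEq]; omega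
    have hS : S.Finite := ((Set.finite_Iio n).prod (Set.finite_Iio n)).subset
      fun p ⟨h1, h2, _⟩ => ⟨show p.1 < n by omega, h2⟩
    rw [hsplit, Set.ncard_insert_of_notMem _ (hS.insert _), Set.ncard_insert_of_notMem _ hS, ih]
    · omega
    · exact fun h => lt_irrefl n h.2.1
    · simp only [S, Set.mem_insert_iff, Prod.mk.injEq, Set.mem_ofPred_eq]; omega

/-- For every `n ≥ 2` there exists a packing of `n` horocycles in the
disk model of the hyperbolic plane with exactly `2n - 3` tangencies. -/
theorem exists_horocycle_packing_with_max_tangencies (n : ℕ) (hn : 2 ≤ n) :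
    ∃ (c : Fin n → EuclideanSpace ℝ (Fin 2)) (r : Fin n → ℝ),
      (∀ i, 0 < r i) ∧ (∀ i, r i < 1) ∧
      (∀ i, ‖c i‖ = 1 - r i) ∧
      (∀ i j, i ≠ j → r i + r j ≤ ‖c i - c j‖) ∧
      Set.ncard {p : Fin n × Fin n | p.1 < p.2 ∧ ‖c p.1 - c p.2‖ = r p.1 + r p.2}
        = 2 * n - 3 := by
  refine ⟨fun i => fanCenter i, fun i => fanRadius i, fun i => fanRadius_pos i,
    fun i => fanRadius_lt_one i, fun i => norm_fanCenter i,
    fun i j h => fanRadius_add_le_norm_fanCenter_sub (Fin.val_injective.ne h), ?_⟩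
  have htangent : {p : Fin n × Fin n | p.1 < p.2 ∧
        ‖fanCenter p.1 - fanCenter p.2‖ = fanRadius p.1 + fanRadius p.2}
      = Prod.map Fin.val Fin.val ⁻¹'
          {p : ℕ × ℕ | p.1 < p.2 ∧ p.2 < n ∧ (p.1 = 0 ∨ p.2 = p.1 + 1)} := by
    ext ⟨i, j⟩
    simp only [Set.mem_ofPred_eq, Set.mem_preimage, Prod.map_fst, Prod.map_snd, Fin.lt_def, j.isLt,
      true_and]
    exact and_congr_right norm_fanCenter_sub_eq_iff
  rw [htangent, Set.ncard_preimage_of_injective_subset_range, ncard_fan_pairs hn]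
  · exact Fin.val_injective.prodMap Fin.val_injective
  · rintro ⟨a, b⟩ ⟨hab, hb, -⟩
    exact ⟨(⟨a, hab.trans hb⟩, ⟨b, hb⟩), rfl⟩
end

section
/- Let p₁, p₂, p₃ ∈ ℝ² and 0 < R₁ < R₂ ≤ R₃ be such that ‖p₁ − p₂‖² = 4 R₁ R₂, ‖p₁ − p₃‖² = 4 R₁ R₃, and ‖p₂ − p₃‖² ≥ 4 R₂ R₃ (i.e. the horosphere represented by (p₁, R₁) is tangent to those represented by (p₂, R₂) and (p₃, R₃), which are themselves disjoint or tangent). Then the angle of the triangle p₁ p₂ p₃ at the vertex p₁ (the angle between p₂ − p₁ and p₃ − p₁) is strictly greater than π/3. -/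
set_option maxHeartbeats 1000000


/-- If the horosphere `(p₁, R₁)` with the smallest radius is tangent to
`(p₂, R₂)` and `(p₃, R₃)`, which are themselves disjoint or tangent, then the angle
of the triangle `p₁ p₂ p₃` at `p₁` is greater than `π/3`. -/
theorem angle_at_smallest_horosphere_gt_pi_div_three
    (p₁ p₂ p₃ : EuclideanSpace ℝ (Fin 2)) (R₁ R₂ R₃ : ℝ)
    (hR₁ : 0 < R₁) (h12 : R₁ < R₂) (h23 : R₂ ≤ R₃)
    (ht2 : ‖p₁ - p₂‖ ^ 2 = 4 * R₁ * R₂)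
    (ht3 : ‖p₁ - p₃‖ ^ 2 = 4 * R₁ * R₃)
    (h23' : ‖p₂ - p₃‖ ^ 2 ≥ 4 * R₂ * R₃) :
    Real.pi / 3 < EuclideanGeometry.angle p₂ p₁ p₃ := by
  have hR₂ : 0 < R₂ := hR₁.trans h12
  have hR₃ : 0 < R₃ := hR₂.trans_le h23
  set a := dist p₂ p₁ with ha
  set b := dist p₃ p₁ with hb
  set c := dist p₂ p₃ with hc
  have ha2 : a ^ 2 = 4 * R₁ * R₂ := by
    rw [ha, dist_eq_norm, ← norm_neg, neg_sub]; exact ht2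
  have hb2 : b ^ 2 = 4 * R₁ * R₃ := by
    rw [hb, dist_eq_norm, ← norm_neg, neg_sub]; exact ht3
  have hc2 : c ^ 2 ≥ 4 * R₂ * R₃ := by
    rw [hc, dist_eq_norm]; exact h23'
  have hapos : 0 < a := by nlinarith [dist_nonneg (x := p₂) (y := p₁)]
  have hbpos : 0 < b := by nlinarith [dist_nonneg (x := p₃) (y := p₁)]
  set s := Real.sqrt (R₂ * R₃) with hs
  have hsnn : 0 ≤ s := Real.sqrt_nonneg _
  have hs2 : s * s = R₂ * R₃ := Real.mul_self_sqrt (by positivity)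
  have hspos : 0 < s := by nlinarith
  have hsR₂ : R₂ ≤ s := by nlinarith
  have hsR₃ : s ≤ R₃ := by nlinarith
  -- a * b = 4 * R₁ * s
  have hab : a * b = 4 * R₁ * s := by
    have h1 : (a * b) ^ 2 = (4 * R₁ * s) ^ 2 := by
      have : (a * b) ^ 2 = a ^ 2 * b ^ 2 := by ring
      rw [this, ha2, hb2]; linear_combination (-(16 * R₁ ^ 2)) * hs2
    have h2 : 0 ≤ a * b := by positivity
    have h3 : 0 ≤ 4 * R₁ * s := by positivity
    rw [← Real.sqrt_sq h2, h1, Real.sqrt_sq h3]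
  -- key inequality
  have hkey : 4 * R₁ * R₂ + 4 * R₁ * R₃ - 4 * (s * s) < 4 * R₁ * s := by
    nlinarith [mul_pos (sub_pos.mpr h12) (by nlinarith : (0:ℝ) < R₂ + R₃ - s),
      mul_nonneg hR₂.le (sub_nonneg.mpr hsR₂)]
  have hlaw := EuclideanGeometry.law_cos p₂ p₁ p₃
  set cθ := Real.cos (EuclideanGeometry.angle p₂ p₁ p₃) with hcθ
  have hcos : cθ < 1 / 2 := by
    have h8 : (0:ℝ) < 8 * R₁ * s := by positivity
    rw [← mul_lt_mul_iff_right₀ h8]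
    have h9 : 8 * R₁ * s * cθ = a ^ 2 + b ^ 2 - c ^ 2 := by
      linear_combination hlaw - 2 * cθ * hab
    linarith [hc2, hkey, ha2, hb2]
  by_contra h
  push_neg at h
  have h0 : 0 ≤ EuclideanGeometry.angle p₂ p₁ p₃ := EuclideanGeometry.angle_nonneg _ _ _
  have hpi : Real.pi / 3 ≤ Real.pi := by linarith [Real.pi_pos]
  have := Real.cos_le_cos_of_nonneg_of_le_pi h0 hpi h
  rw [Real.cos_pi_div_three] at this
  have : cθ ≥ 1 / 2 := this
  linarith
end

section
/- Let n ≥ 1 and let (p_i, R_i), i ∈ Fin n, represent a packing of horospheres: p_i ∈ ℝ², R_i > 0, the pairs (p_i, R_i) are distinct, and ‖p_i − p_j‖² ≥ 4 R_i R_j for all i ≠ j. Suppose the first horosphere has strictly smallest radius: R₁ < R_j for all j ≠ 1. Then the number of indices j ≠ 1 with ‖p₁ − p_j‖² = 4 R₁ R_j (horospheres tangent to the first one) is at most 5. -/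
/-!
Measure the base points from that of the smallest horosphere, of radius `r`: a horosphere `j`
tangent to it gives a vector `u_j = p_j - p_0` with `‖u_j‖² = 4 r R_j`. Disjointness
`‖u_j - u_k‖² ≥ 4 R_j R_k` together with `r < R_j, R_k` forces `⟪u_j, u_k⟫ < 2 r² < ½ ‖u_j‖ ‖u_k‖`,
so any two of these vectors make an angle larger than `π / 3`. At most five directions in the
plane are pairwise more than `π / 3` apart: sorting their arguments, five consecutive gaps would
already exceed `5π / 3`, leaving less than `π / 3` for the gap that closes the circle.
-/

open Real InnerProductGeometry

theorem inner_lt_half_norm_mul_norm_of_tangent {V : Type*} [NormedAddCommGroup V]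
    [InnerProductSpace ℝ V] {u w : V} {r A B : ℝ} (hr : 0 < r) (hA : r < A) (hB : r < B)
    (hu : ‖u‖ ^ 2 = 4 * r * A) (hw : ‖w‖ ^ 2 = 4 * r * B) (hsep : 4 * A * B ≤ ‖u - w‖ ^ 2) :
    inner ℝ u w < 1 / 2 * (‖u‖ * ‖w‖) := by
  have hprod : (‖u‖ * ‖w‖) ^ 2 = 16 * r ^ 2 * (A * B) := by rw [mul_pow, hu, hw]; ring
  have hAB : r ^ 2 < A * B := by nlinarith
  have hnorm : 4 * r ^ 2 < ‖u‖ * ‖w‖ := by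
    refine lt_of_pow_lt_pow_left₀ 2 (by positivity) ?_
    rw [hprod]; nlinarith [mul_lt_mul_of_pos_left hAB (by positivity : (0:ℝ) < 16 * r ^ 2)]
  calc inner ℝ u w ≤ 2 * r * (A + B) - 2 * A * B := by
        rw [norm_sub_sq_real, hu, hw] at hsep; linarith
    _ < 2 * r ^ 2 := by nlinarith [mul_pos (sub_pos.2 hA) (sub_pos.2 hB)]
    _ < 1 / 2 * (‖u‖ * ‖w‖) := by linarith

theorem pi_div_three_lt_angle_of_inner_lt {V : Type*} [NormedAddCommGroup V]
    [InnerProductSpace ℝ V] {u w : V} (h : inner ℝ u w < 1 / 2 * (‖u‖ * ‖w‖)) :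
    π / 3 < angle u w := by
  have hpos : 0 < ‖u‖ * ‖w‖ := by
    linarith [neg_abs_le (inner ℝ u w), abs_real_inner_le_norm u w]
  by_contra! hle
  have := cos_le_cos_of_nonneg_of_le_pi (angle_nonneg u w) (by linarith [pi_pos]) hle
  rw [cos_pi_div_three, cos_angle, le_div_iff₀ hpos] at this
  linarith

theorem Real.mem_Ioo_pi_div_three_of_cos_lt_half {d : ℝ} (h0 : 0 ≤ d) (h2π : d ≤ 2 * π)
    (hcos : cos d < 1 / 2) : d ∈ Set.Ioo (π / 3) (5 * π / 3) := by
  rw [← cos_pi_div_three] at hcos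
  constructor
  · by_contra! h
    linarith [cos_le_cos_of_nonneg_of_le_pi h0 (by linarith [pi_pos]) h]
  · by_contra! h
    have hreflect : cos (2 * π - d) = cos d := cos_two_pi_sub d
    linarith [cos_le_cos_of_nonneg_of_le_pi (x := 2 * π - d) (y := π / 3) (by linarith)
      (by linarith [pi_pos]) (by linarith)]

theorem Finset.card_le_five_of_cos_sub_lt_half {s : Finset ℝ} (hs : ∀ x ∈ s, x ∈ Set.Ioc (-π) π)
    (hcos : ∀ x ∈ s, ∀ y ∈ s, x ≠ y → cos (x - y) < 1 / 2) : s.card ≤ 5 := by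
  by_contra! h6
  obtain ⟨t, hts, ht⟩ := Finset.exists_subset_card_eq (show 6 ≤ s.card by omega)
  let f := t.orderIsoOfFin ht
  have hgap : ∀ i j : Fin 6, i < j → (f j : ℝ) - f i ∈ Set.Ioo (π / 3) (5 * π / 3) := by
    intro i j hij
    have hlt : (f i : ℝ) < f j := f.strictMono hij
    have hi := hs _ (hts (f i).2)
    have hj := hs _ (hts (f j).2)
    exact mem_Ioo_pi_div_three_of_cos_lt_half (by linarith) (by linarith [hi.1, hj.2])
      (hcos _ (hts (f j).2) _ (hts (f i).2) hlt.ne')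
  linarith [(hgap 0 1 (by decide)).1, (hgap 1 2 (by decide)).1, (hgap 2 3 (by decide)).1,
    (hgap 3 4 (by decide)).1, (hgap 4 5 (by decide)).1, (hgap 0 5 (by decide)).2]

theorem Complex.cos_arg_sub_arg {x y : ℂ} (hx : x ≠ 0) (hy : y ≠ 0) :
    Real.cos (x.arg - y.arg) = Real.cos (angle x y) := by
  rw [angle_eq_abs_arg hx hy, Real.cos_abs, ← Angle.cos_coe, ← Angle.cos_coe,
    arg_div_coe_angle hx hy, Angle.coe_sub]

theorem Complex.card_le_five_of_pi_div_three_lt_angle {ι : Type*} {s : Finset ι} {z : ι → ℂ}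
    (hz : ∀ i ∈ s, z i ≠ 0) (hangle : ∀ i ∈ s, ∀ j ∈ s, i ≠ j → π / 3 < angle (z i) (z j)) :
    s.card ≤ 5 := by
  classical
  have hcos : ∀ i ∈ s, ∀ j ∈ s, i ≠ j → Real.cos ((z i).arg - (z j).arg) < 1 / 2 := by
    intro i hi j hj hij
    rw [cos_arg_sub_arg (hz i hi) (hz j hj), ← cos_pi_div_three]
    exact cos_lt_cos_of_nonneg_of_le_pi (by positivity) (angle_le_pi _ _) (hangle i hi j hj hij)
  have hinj : Set.InjOn (arg ∘ z) s := fun i hi j hj hij => by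
    by_contra hne
    have := hcos i hi j hj hne
    rw [show (z i).arg = (z j).arg from hij, sub_self, Real.cos_zero] at this
    norm_num at this
  rw [← Finset.card_image_of_injOn hinj]
  refine Finset.card_le_five_of_cos_sub_lt_half ?_ ?_
  · simp only [Finset.mem_image, Function.comp_apply]
    rintro _ ⟨i, -, rfl⟩
    exact ⟨neg_pi_lt_arg _, arg_le_pi _⟩
  · simp only [Finset.mem_image, Function.comp_apply]
    rintro _ ⟨i, hi, rfl⟩ _ ⟨j, hj, rfl⟩ hij
    exact hcos i hi j hj fun h => hij (h ▸ rfl)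

theorem smallest_horosphere_at_most_five_tangencies_general (n : ℕ) (hn : 1 ≤ n)
    (p : Fin n → EuclideanSpace ℝ (Fin 2)) (R : Fin n → ℝ)
    (hR : ∀ i, 0 < R i)
    (hsep : ∀ i j, i ≠ j → 4 * R i * R j ≤ ‖p i - p j‖ ^ 2)
    (hmin : ∀ j, j ≠ (⟨0, hn⟩ : Fin n) → R ⟨0, hn⟩ < R j) :
    Set.ncard {j : Fin n | j ≠ ⟨0, hn⟩ ∧
      ‖p ⟨0, hn⟩ - p j‖ ^ 2 = 4 * R ⟨0, hn⟩ * R j} ≤ 5 := by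
  classical
  set i₀ : Fin n := ⟨0, hn⟩
  set T := {j : Fin n | j ≠ i₀ ∧ ‖p i₀ - p j‖ ^ 2 = 4 * R i₀ * R j}
  have htangent : ∀ j ∈ T, ‖p j - p i₀‖ ^ 2 = 4 * R i₀ * R j := fun j hj => by
    rw [norm_sub_rev]; exact hj.2
  let e := Complex.orthonormalBasisOneI.repr.symm.toLinearIsometry
  rw [Set.ncard_eq_toFinset_card']
  refine Complex.card_le_five_of_pi_div_three_lt_angle (z := fun j => e (p j - p i₀)) ?_ ?_
  · intro j hj hzero
    rw [Set.mem_toFinset] at hj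
    have := htangent j hj
    rw [← e.norm_map, hzero, norm_zero] at this
    nlinarith [hR i₀, hR j]
  · intro j hj k hk hjk
    rw [Set.mem_toFinset] at hj hk
    rw [e.angle_map]
    refine pi_div_three_lt_angle_of_inner_lt <| inner_lt_half_norm_mul_norm_of_tangent (hR i₀)
      (hmin j hj.1) (hmin k hk.1) (htangent j hj) (htangent k hk) ?_
    rw [sub_sub_sub_cancel_right]
    exact hsep j k hjk

/-- In a packing of horospheres, the horosphere with strictly smallest
Euclidean radius is tangent to at most 5 other horospheres. -/
theorem smallest_horosphere_at_most_five_tangencies (n : ℕ) (hn : 1 ≤ n)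
    (p : Fin n → EuclideanSpace ℝ (Fin 2)) (R : Fin n → ℝ)
    (hR : ∀ i, 0 < R i)
    (hdist : Function.Injective (fun i => (p i, R i)))
    (hsep : ∀ i j, i ≠ j → 4 * R i * R j ≤ ‖p i - p j‖ ^ 2)
    (hmin : ∀ j, j ≠ (⟨0, hn⟩ : Fin n) → R ⟨0, hn⟩ < R j) :
    Set.ncard {j : Fin n | j ≠ ⟨0, hn⟩ ∧
      ‖p ⟨0, hn⟩ - p j‖ ^ 2 = 4 * R ⟨0, hn⟩ * R j} ≤ 5 :=
  smallest_horosphere_at_most_five_tangencies_general n hn p R hR hsep hmin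
end

section
/- There do not exist five pairwise tangent horospheres: there are no p : Fin 5 → ℝ² and R : Fin 5 → ℝ with R i > 0 for all i and ‖p i − p j‖² = 4 (R i) (R j) for all i ≠ j. -/
/-!
Lift a horosphere with base point `p ∈ E` and Euclidean radius `R` to the vector
`(2R)⁻¹ • (1, ‖p‖², p)` of `ℝ × ℝ × E`, equipped with the Lorentzian form
`B((a, b, x), (a', b', x')) = a b' + b a' - 2 ⟪x, x'⟫`.  Then `B(vᵢ, vⱼ) = ‖pᵢ - pⱼ‖² / (4 Rᵢ Rⱼ)`,
so the lifts of pairwise tangent horospheres have Gram matrix `J - I`, which is nonsingular.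
Hence they are linearly independent, and there are at most `dim E + 2` of them; for `E = ℝ²`
that is `4`.
-/

open scoped RealInnerProductSpace

section GramMatrix

variable {K V ι : Type*} [Field K] [AddCommGroup V] [Module K V] [Fintype ι] [DecidableEq ι]

theorem LinearMap.BilinForm.linearIndependent_of_apply_eq_ite (B : LinearMap.BilinForm K V)
    (v : ι → V) (hv : ∀ i j, B (v i) (v j) = if i = j then 0 else 1)
    (hcard : (Fintype.card ι : K) ≠ 1) : LinearIndependent K v := by
  rw [Fintype.linearIndependent_iff]
  intro g hg
  have hgS : ∀ j, g j = ∑ i, g i := by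
    intro j
    have hterm : ∀ i, B (g i • v i) (v j) = g i - if i = j then g i else 0 := by
      intro i
      rw [map_smul, LinearMap.smul_apply, hv]
      split_ifs <;> simp
    have hBj : B (∑ i, g i • v i) (v j) = ∑ i, g i - g j := by
      simp only [map_sum, LinearMap.sum_apply, hterm, Finset.sum_sub_distrib,
        Finset.sum_ite_eq', Finset.mem_univ, if_true]
    rw [hg, map_zero, LinearMap.zero_apply] at hBj
    linear_combination hBj
  have hS : ∑ i, g i = 0 := by
    have hsum : ∑ i, g i = Fintype.card ι * ∑ i, g i := by
      conv_lhs => rw [Finset.sum_congr rfl fun j _ => hgS j]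
      simp
    have : ((Fintype.card ι : K) - 1) * ∑ i, g i = 0 := by linear_combination -hsum
    exact (mul_eq_zero.mp this).resolve_left (sub_ne_zero.mpr hcard)
  intro i
  rw [hgS i, hS]

end GramMatrix

section Horospheres

variable {E : Type*} [NormedAddCommGroup E] [InnerProductSpace ℝ E]

variable (E) in
noncomputable def horosphereForm : LinearMap.BilinForm ℝ (ℝ × ℝ × E) :=
  LinearMap.mk₂ ℝ (fun u w => u.1 * w.2.1 + u.2.1 * w.1 - 2 * ⟪u.2.2, w.2.2⟫)
    (fun u u' w => by simp only [Prod.fst_add, Prod.snd_add, inner_add_left]; ring)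
    (fun c u w => by simp only [Prod.smul_fst, Prod.smul_snd, inner_smul_left, smul_eq_mul,
      RCLike.conj_to_real]; ring)
    (fun u w w' => by simp only [Prod.fst_add, Prod.snd_add, inner_add_right]; ring)
    (fun c u w => by simp only [Prod.smul_fst, Prod.smul_snd, inner_smul_right, smul_eq_mul]; ring)

theorem horosphereForm_apply (u w : ℝ × ℝ × E) :
    horosphereForm E u w = u.1 * w.2.1 + u.2.1 * w.1 - 2 * ⟪u.2.2, w.2.2⟫ :=
  rfl

noncomputable def horosphereLift (p : E) (R : ℝ) : ℝ × ℝ × E :=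
  (2 * R)⁻¹ • (1, ‖p‖ ^ 2, p)

theorem horosphereForm_horosphereLift (p q : E) (R S : ℝ) :
    horosphereForm E (horosphereLift p R) (horosphereLift q S) = ‖p - q‖ ^ 2 / (4 * R * S) := by
  simp only [horosphereForm_apply, horosphereLift, Prod.smul_fst, Prod.smul_snd, smul_eq_mul,
    inner_smul_left, inner_smul_right, RCLike.conj_to_real, norm_sub_sq_real]
  rw [div_eq_mul_inv, show 4 * R * S = (2 * R) * (2 * S) by ring, mul_inv]
  ring

theorem card_le_finrank_add_two_of_pairwise_tangent [FiniteDimensional ℝ E] {ι : Type*}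
    [Fintype ι] (p : ι → E) (R : ι → ℝ) (hR : ∀ i, R i ≠ 0)
    (htan : Pairwise fun i j => ‖p i - p j‖ ^ 2 = 4 * R i * R j) :
    Fintype.card ι ≤ Module.finrank ℝ E + 2 := by
  by_cases hcard : Fintype.card ι = 1
  · omega
  classical
  have hgram : ∀ i j, horosphereForm E (horosphereLift (p i) (R i)) (horosphereLift (p j) (R j))
      = if i = j then 0 else 1 := by
    intro i j
    rw [horosphereForm_horosphereLift]
    split_ifs with hij
    · simp [hij]
    · rw [htan hij, div_self (by simp [hR])]
  have hli := (horosphereForm E).linearIndependent_of_apply_eq_ite _ hgram (mod_cast hcard)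
  have := hli.fintype_card_le_finrank
  simp only [Module.finrank_prod, Module.finrank_self] at this
  omega

end Horospheres

/-- There do not exist five pairwise tangent horospheres. -/
theorem no_five_pairwise_tangent_horospheres :
    ¬ ∃ (p : Fin 5 → EuclideanSpace ℝ (Fin 2)) (R : Fin 5 → ℝ),
        (∀ i, 0 < R i) ∧
        (∀ i j, i ≠ j → ‖p i - p j‖ ^ 2 = 4 * R i * R j) := by
  rintro ⟨p, R, hR, htan⟩
  have := card_le_finrank_add_two_of_pairwise_tangent p R (fun i => (hR i).ne') htan
  simp at this
end

section
/- For every integer n ≥ 3 there exists a packing of n horospheres with 3n − 6 tangencies: there exist p : Fin n → ℝ² and R : Fin n → ℝ with R i > 0 for all i, the pairs (p i, R i) pairwise distinct, ‖p i − p j‖² ≥ 4 (R i) (R j) for all i ≠ j, and the number of unordered pairs {i, j}, i ≠ j, with ‖p i − p j‖² = 4 (R i) (R j) equal to 3n − 6. -/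
/-!
Let `ζ` be a primitive cube root of unity and `u` the sequence `u 0 = 0`, `u 1 = 1`,
`u (j + 2) = u (j + 1) + ζ * u j` of Eisenstein integers. Take the Ford horospheres at the points
`u i / u (i + 1)` with Euclidean diameter `1 / ‖u (i + 1)‖ ^ 2`. By d'Ocagne's identity the
determinant `u (i + d) * u (i + 1) - u (i + d + 1) * u i` equals `(-ζ) ^ i * u d`, a unit times
`u d`, so the squared distance of the points `i` and `i + d` is `‖u d‖ ^ 2 * (4 * R i * R (i + d))`.
Now `N j = ‖u j‖ ^ 2` satisfies `N (j + 4) = N (j + 3) + N (j + 2) + N (j + 1) - N j`, hence is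
nondecreasing, with `N 1 = N 2 = N 3 = 1` and `N 4 = 3`. So the horospheres form a packing in which
`i < j` are tangent exactly when `j ≤ i + 3`: each new horosphere touches the three before it,
which gives `3 + 3 * (n - 3) = 3 * n - 6` tangencies.
-/

open Complex ComplexConjugate Finset

theorem dOcagne_identity {R : Type*} [CommRing R] {c : R} {u : ℕ → R} (h0 : u 0 = 0)
    (h1 : u 1 = 1) (hrec : ∀ j, u (j + 2) = u (j + 1) + c * u j) (i d : ℕ) :
    u (i + d) * u (i + 1) - u (i + d + 1) * u i = (-c) ^ i * u d := by
  induction i with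
  | zero => simp [h0, h1]
  | succ i ih =>
    rw [pow_succ, mul_comm _ (-c), mul_assoc, ← ih, show i + 1 + d + 1 = i + d + 2 by omega,
      show i + 1 + d = i + d + 1 by omega, hrec, hrec]
    ring

theorem norm_sq_add_four_of_rec {ζ : ℂ} (hζ : ζ ^ 2 + ζ + 1 = 0) (hζc : conj ζ = -1 - ζ)
    {u : ℕ → ℂ} (hrec : ∀ j, u (j + 2) = u (j + 1) + ζ * u j) (j : ℕ) :
    ‖u (j + 4)‖ ^ 2 = ‖u (j + 3)‖ ^ 2 + ‖u (j + 2)‖ ^ 2 + ‖u (j + 1)‖ ^ 2 - ‖u j‖ ^ 2 := by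
  apply ofReal_injective
  push_cast
  simp only [← mul_conj', hrec, map_add, map_mul, hζc]
  linear_combination (-3 * u (j + 1) * conj (u (j + 1)) + (2 * ζ + 2) * u (j + 1) * conj (u j)
    - 2 * ζ * u j * conj (u (j + 1)) + (ζ ^ 2 + ζ + 1) * u j * conj (u j)) * hζ

theorem monotone_of_nonneg_of_four_term_rec {N : ℕ → ℝ} (hN : ∀ j, 0 ≤ N j)
    (hrec : ∀ j, N (j + 4) = N (j + 3) + N (j + 2) + N (j + 1) - N j)
    (h01 : N 0 ≤ N 1) (h12 : N 1 ≤ N 2) (h23 : N 2 ≤ N 3) : Monotone N := by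
  have hsteps (j : ℕ) : N j ≤ N (j + 1) ∧ N (j + 1) ≤ N (j + 2) ∧ N (j + 2) ≤ N (j + 3) := by
    induction j with
    | zero => exact ⟨h01, h12, h23⟩
    | succ j ih => exact ⟨ih.2.1, ih.2.2, by linarith [hrec j, hN (j + 2), ih.1]⟩
  exact monotone_nat_of_le_succ fun j => (hsteps j).1

theorem two_mul_sum_range_min_add (k n : ℕ) (hkn : k ≤ n) :
    2 * ∑ j ∈ range n, min j k + k * (k + 1) = 2 * k * n := by
  induction n, hkn using Nat.le_induction with
  | base =>
    rw [sum_congr rfl fun j hj => min_eq_left (mem_range.1 hj).le, mul_comm, sum_range_id_mul_two]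
    cases k
    · simp
    · simp only [Nat.add_sub_cancel]; ring
  | succ n hkn ih =>
    rw [sum_range_succ, min_eq_right hkn]
    linarith

theorem ncard_pairs_lt_le_add (n k : ℕ) :
    {q : Fin n × Fin n | q.1 < q.2 ∧ (q.2 : ℕ) ≤ q.1 + k}.ncard = ∑ j ∈ range n, min j k := by
  have inner (j : Fin n) : #{i : Fin n | i < j ∧ (j : ℕ) ≤ i + k} = min (j : ℕ) k := by
    rw [show ({i : Fin n | i < j ∧ (j : ℕ) ≤ i + k} : Finset (Fin n)) =
        Ico ⟨j - k, by omega⟩ j by ext i; simp only [mem_filter, mem_univ, true_and, mem_Ico,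
          Fin.lt_def, Fin.le_def]; omega, Fin.card_Ico]
    simp only; omega
  rw [Set.ncard_eq_toFinset_card', Set.toFinset_ofPred, card_filter, Fintype.sum_prod_type_right,
    ← Fin.sum_univ_eq_sum_range]
  simp_rw [← card_filter, inner]

namespace ApollonianChain

noncomputable def ζ : ℂ := ⟨-1 / 2, √3 / 2⟩

theorem sqrt_three_sq : √3 ^ 2 = 3 := Real.sq_sqrt (by norm_num)

theorem ζ_sq_add_ζ_add_one : ζ ^ 2 + ζ + 1 = 0 := by
  apply Complex.ext <;> simp [ζ, sq] <;> linarith [sqrt_three_sq]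

theorem conj_ζ : conj ζ = -1 - ζ := by
  apply Complex.ext <;> norm_num [ζ]

theorem norm_ζ : ‖ζ‖ = 1 := by
  rw [norm_def, Real.sqrt_eq_one, normSq_apply]
  simp only [ζ]
  linarith [sqrt_three_sq]

noncomputable def u : ℕ → ℂ
  | 0 => 0
  | 1 => 1
  | j + 2 => u (j + 1) + ζ * u j

theorem u_add_two (j : ℕ) : u (j + 2) = u (j + 1) + ζ * u j := rfl

theorem norm_u_sq_three : ‖u 3‖ ^ 2 = 1 := by
  rw [Complex.sq_norm, normSq_apply]
  simp [u, ζ]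
  linarith [sqrt_three_sq]

theorem norm_u_sq_four : ‖u 4‖ ^ 2 = 3 := by
  rw [Complex.sq_norm, normSq_apply]
  simp [u, ζ]
  linarith [sqrt_three_sq]

theorem monotone_norm_u_sq : Monotone fun j => ‖u j‖ ^ 2 :=
  monotone_of_nonneg_of_four_term_rec (fun j => by positivity)
    (norm_sq_add_four_of_rec ζ_sq_add_ζ_add_one conj_ζ u_add_two)
    (by simp [u]) (by simp [u]) (by rw [norm_u_sq_three]; simp [u])

theorem one_le_norm_u_sq {j : ℕ} (hj : 1 ≤ j) : 1 ≤ ‖u j‖ ^ 2 := by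
  simpa [u] using monotone_norm_u_sq hj

theorem u_ne_zero {j : ℕ} (hj : 1 ≤ j) : u j ≠ 0 := by
  intro h
  have := one_le_norm_u_sq hj
  norm_num [h] at this

theorem norm_u_sq_eq_one_iff {j : ℕ} (hj : 1 ≤ j) : ‖u j‖ ^ 2 = 1 ↔ j ≤ 3 := by
  refine ⟨fun h => ?_, fun h => le_antisymm ?_ (one_le_norm_u_sq hj)⟩
  · by_contra! hj4
    have h4 : ‖u 4‖ ^ 2 ≤ ‖u j‖ ^ 2 := monotone_norm_u_sq (by omega)
    linarith [norm_u_sq_four]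
  · have h3 : ‖u j‖ ^ 2 ≤ ‖u 3‖ ^ 2 := monotone_norm_u_sq h
    linarith [norm_u_sq_three]

noncomputable def center (i : ℕ) : ℂ := u i / u (i + 1)

noncomputable def radius (i : ℕ) : ℝ := (2 * ‖u (i + 1)‖ ^ 2)⁻¹

theorem radius_pos (i : ℕ) : 0 < radius i := by
  have := one_le_norm_u_sq (Nat.le_add_left 1 i)
  unfold radius
  positivity

theorem norm_center_sub_sq (i d : ℕ) :
    ‖center i - center (i + d)‖ ^ 2 = ‖u d‖ ^ 2 * (4 * radius i * radius (i + d)) := by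
  have ha := u_ne_zero (Nat.le_add_left 1 i)
  have hb := u_ne_zero (Nat.le_add_left 1 (i + d))
  have hsub : center i - center (i + d) = -((-ζ) ^ i * u d) / (u (i + 1) * u (i + d + 1)) := by
    rw [center, center, div_sub_div _ _ ha hb,
      ← dOcagne_identity (c := ζ) rfl rfl u_add_two i d]
    ring
  rw [hsub, norm_div, norm_neg, norm_mul, norm_pow, norm_neg, norm_ζ, one_pow, one_mul,
    norm_mul, radius, radius]
  field_simp
  ring

theorem four_mul_radius_mul_le_norm_center_sub_sq {i j : ℕ} (hij : i ≠ j) :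
    4 * radius i * radius j ≤ ‖center i - center j‖ ^ 2 := by
  wlog h : i < j generalizing i j
  · rw [norm_sub_rev, mul_right_comm]
    exact this hij.symm (by omega)
  obtain ⟨d, rfl⟩ : ∃ d, j = i + d := ⟨j - i, by omega⟩
  rw [norm_center_sub_sq]
  exact le_mul_of_one_le_left (by have := radius_pos i; have := radius_pos (i + d); positivity)
    (one_le_norm_u_sq (by omega))

theorem norm_center_sub_sq_eq_iff {i j : ℕ} (hij : i < j) :
    ‖center i - center j‖ ^ 2 = 4 * radius i * radius j ↔ j ≤ i + 3 := by
  obtain ⟨d, rfl⟩ : ∃ d, j = i + d := ⟨j - i, by omega⟩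
  have := radius_pos i
  have := radius_pos (i + d)
  rw [norm_center_sub_sq, mul_eq_right₀ (by positivity), norm_u_sq_eq_one_iff (by omega)]
  omega

theorem center_injective : Function.Injective center := by
  intro i j h
  by_contra hij
  have := four_mul_radius_mul_le_norm_center_sub_sq hij
  rw [h, sub_self, norm_zero] at this
  have := radius_pos i
  have := radius_pos j
  nlinarith

end ApollonianChain

open ApollonianChain in
/-- For every `n ≥ 3` there exists a packing of `n` horospheres with
`3n - 6` tangencies (the Apollonian construction of Pacard and Pimentel). -/
theorem exists_apollonian_horosphere_packing (n : ℕ) (hn : 3 ≤ n) :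
    ∃ (p : Fin n → EuclideanSpace ℝ (Fin 2)) (R : Fin n → ℝ),
      (∀ i, 0 < R i) ∧
      Function.Injective (fun i => (p i, R i)) ∧
      (∀ i j, i ≠ j → 4 * R i * R j ≤ ‖p i - p j‖ ^ 2) ∧
      Set.ncard {q : Fin n × Fin n | q.1 < q.2 ∧
        ‖p q.1 - p q.2‖ ^ 2 = 4 * R q.1 * R q.2} = 3 * n - 6 := by
  let F := orthonormalBasisOneI.repr
  have hF (x y : ℂ) : ‖F x - F y‖ = ‖x - y‖ := by rw [← map_sub, LinearIsometryEquiv.norm_map]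
  refine ⟨fun i => F (center i), fun i => radius i, fun i => radius_pos i, ?_, ?_, ?_⟩
  · exact fun i j h => Fin.val_injective (center_injective (F.injective (congrArg Prod.fst h)))
  · exact fun i j hij => hF _ _ ▸ four_mul_radius_mul_le_norm_center_sub_sq (Fin.val_ne_iff.2 hij)
  · have htangent : {q : Fin n × Fin n | q.1 < q.2 ∧
        ‖F (center q.1) - F (center q.2)‖ ^ 2 = 4 * radius q.1 * radius q.2} =
        {q : Fin n × Fin n | q.1 < q.2 ∧ (q.2 : ℕ) ≤ q.1 + 3} := by
      ext q
      simp only [Set.mem_ofPred_eq, hF]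
      exact and_congr_right fun h => norm_center_sub_sq_eq_iff (Fin.lt_def.1 h)
    rw [htangent, ncard_pairs_lt_le_add]
    have := two_mul_sum_range_min_add 3 n hn
    omega
end

section
/- For every integer n ≥ 5, any packing of n horospheres has at most 5n − 16 tangencies: if p : Fin n → ℝ² and R : Fin n → ℝ satisfy R i > 0 for all i, the pairs (p i, R i) are pairwise distinct, and ‖p i − p j‖² ≥ 4 (R i) (R j) for all i ≠ j, then the number of unordered pairs {i, j}, i ≠ j, with ‖p i − p j‖² = 4 (R i) (R j) is at most 5n − 16. -/
/-!
Induction on `n`. Five pairwise tangent horospheres cannot exist: lifting the base points to the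
paraboloid `p ↦ (1, p, ‖p‖²)` in `ℝ⁴` gives a nontrivial relation `∑ cᵢ • (1, pᵢ, ‖pᵢ‖²) = 0`,
and pairing it with the tangency equations forces `cᵢ Rᵢ` to be constant, hence `c = 0`.
In the inductive step remove a horosphere of least radius, rightmost among those. Seen from it,
any two of its neighbours lie at an angle of at least `π / 3`, with equality only between
neighbours of the same least radius; six neighbours would therefore form a regular hexagon of
least horospheres, one of which lies to its right. So it has at most five tangencies.
-/

open Finset Real Complex

/-- For symmetric `r`, one pair per edge of the graph of `r`. -/
def ltPairs {α : Type*} [LT α] (r : α → α → Prop) : Set (α × α) := {q | q.1 < q.2 ∧ r q.1 q.2}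

section Paraboloid

variable {E : Type*} [NormedAddCommGroup E] [InnerProductSpace ℝ E] {ι : Type*} [Fintype ι]

theorem exists_paraboloid_dependence [FiniteDimensional ℝ E]
    (hcard : Module.finrank ℝ E + 2 < Fintype.card ι) (p : ι → E) :
    ∃ c : ι → ℝ, c ≠ 0 ∧ ∑ i, c i = 0 ∧ ∑ i, c i • p i = 0 ∧ ∑ i, c i * ‖p i‖ ^ 2 = 0 := by
  have hdep : ¬ LinearIndependent ℝ fun i => ((1 : ℝ), p i, ‖p i‖ ^ 2) := fun h => by
    have := h.fintype_card_le_finrank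
    simp only [Module.finrank_prod, Module.finrank_self] at this
    omega
  obtain ⟨c, hc, i, hi⟩ := Fintype.not_linearIndependent_iff.mp hdep
  refine ⟨c, fun h => hi (congrFun h i), ?_, ?_, ?_⟩
  · simpa [Prod.fst_sum] using congrArg Prod.fst hc
  · simpa [Prod.snd_sum, Prod.fst_sum] using congrArg (fun v => v.2.1) hc
  · simpa [Prod.snd_sum] using congrArg (fun v => v.2.2) hc

theorem sum_mul_norm_sub_sq_eq_zero {c : ι → ℝ} {p : ι → E} (h₀ : ∑ i, c i = 0)
    (h₁ : ∑ i, c i • p i = 0) (h₂ : ∑ i, c i * ‖p i‖ ^ 2 = 0) (y : E) :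
    ∑ i, c i * ‖p i - y‖ ^ 2 = 0 := by
  simp_rw [norm_sub_sq_real, mul_add, mul_sub, sum_add_distrib, sum_sub_distrib, ← sum_mul, h₀,
    h₂, mul_left_comm _ (2 : ℝ), ← mul_sum, ← real_inner_smul_left, ← sum_inner, h₁,
    inner_zero_left]
  ring

theorem not_pairwise_tangent [FiniteDimensional ℝ E]
    (hcard : Module.finrank ℝ E + 2 < Fintype.card ι) (p : ι → E) {R : ι → ℝ}
    (hR : ∀ i, 0 < R i) : ¬ Pairwise fun i j => ‖p i - p j‖ ^ 2 = 4 * R i * R j := by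
  intro htan
  obtain ⟨c, hc, h₀, h₁, h₂⟩ := exists_paraboloid_dependence hcard p
  set T := ∑ i, c i * R i
  -- `∑ i, c i * (‖p i - p k‖ ^ 2 - 4 * R i * R k)` is `-4 c k R k²` by tangency and `-4 R k T`
  -- by the relation on the paraboloid.
  have hT : ∀ k, c k * R k = T := by
    intro k
    have hdiag : ∑ i, c i * (‖p i - p k‖ ^ 2 - 4 * R i * R k) = c k * (0 - 4 * R k * R k) := by
      rw [Fintype.sum_eq_single k fun i hik => by rw [htan hik, sub_self, mul_zero], sub_self,
        norm_zero, zero_pow two_ne_zero]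
    have hrel : ∑ i, c i * (‖p i - p k‖ ^ 2 - 4 * R i * R k) = -(4 * R k * T) := by
      simp only [mul_sub, sum_sub_distrib, sum_mul_norm_sub_sq_eq_zero h₀ h₁ h₂, T, mul_sum]
      simp only [zero_sub, neg_inj]
      exact sum_congr rfl fun i _ => by ring
    have : R k * (c k * R k - T) = 0 := by linear_combination (hrel.symm.trans hdiag) / 4
    exact sub_eq_zero.mp ((mul_eq_zero.mp this).resolve_left (hR k).ne')
  have hT0 : T = 0 := by
    have : T * ∑ k, (R k)⁻¹ = 0 := by
      rw [mul_sum, ← h₀]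
      exact sum_congr rfl fun k _ => by rw [← hT k, mul_inv_cancel_right₀ (hR k).ne']
    have hne : Nonempty ι := Fintype.card_pos_iff.mp (by omega)
    exact (mul_eq_zero.mp this).resolve_right (sum_pos (fun k _ => inv_pos.mpr (hR k))
      univ_nonempty).ne'
  exact hc (funext fun k => by simpa [hT0, (hR k).ne'] using hT k)

end Paraboloid

theorem two_inner_le_of_tangent {E : Type*} [NormedAddCommGroup E] [InnerProductSpace ℝ E]
    {x y : E} {r a b : ℝ} (hra : r ≤ a) (hrb : r ≤ b) (hx : ‖x‖ ^ 2 = 4 * r * a)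
    (hy : ‖y‖ ^ 2 = 4 * r * b) (hxy : 4 * a * b ≤ ‖x - y‖ ^ 2) :
    2 * inner ℝ x y ≤ 4 * r ^ 2 := by
  rw [norm_sub_sq_real, hx, hy] at hxy
  nlinarith [mul_nonneg (sub_nonneg.mpr hra) (sub_nonneg.mpr hrb)]

theorem Complex.real_inner_eq_norm_mul_norm_mul_cos_arg_sub (x y : ℂ) :
    inner ℝ x y = ‖x‖ * ‖y‖ * Real.cos (arg x - arg y) := by
  have h : inner ℝ x y = x.re * y.re + x.im * y.im := by
    rw [Complex.inner, mul_re, conj_re, conj_im]; ring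
  rw [h, Real.cos_sub, ← norm_mul_cos_arg x, ← norm_mul_cos_arg y, ← norm_mul_sin_arg x,
    ← norm_mul_sin_arg y]
  ring

theorem pi_div_three_le_of_cos_le_half {d : ℝ} (hd : 0 ≤ d) (hcos : Real.cos d ≤ 1 / 2) :
    π / 3 ≤ d := by
  by_contra! h
  have := Real.cos_lt_cos_of_nonneg_of_le_pi_div_two hd (by linarith [pi_pos]) h
  rw [cos_pi_div_three] at this
  linarith

/-- Six angles in `(-π, π]` that are pairwise at least `π / 3` apart on the circle form a regular
hexagon, one of whose vertices lies in the open right half-plane. -/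
theorem cos_pos_of_hexagon {b : Fin 6 → ℝ} (hb : Monotone b) (hlo : -π < b 0) (hhi : b 5 ≤ π)
    (hcos : ∀ k l, k < l → Real.cos (b l - b k) ≤ 1 / 2) :
    Real.cos (b 2 - b 1) = 1 / 2 ∧ 0 < Real.cos (b 2) := by
  have gap : ∀ k l, k < l → π / 3 ≤ b l - b k := fun k l hkl =>
    pi_div_three_le_of_cos_le_half (sub_nonneg.mpr (hb hkl.le)) (hcos k l hkl)
  have hspan : π / 3 ≤ 2 * π - (b 5 - b 0) :=
    pi_div_three_le_of_cos_le_half (by linarith)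
      (by rw [Real.cos_two_pi_sub]; exact hcos 0 5 (by decide))
  have g₁ := gap 0 1 (by decide)
  have g₂ := gap 1 2 (by decide)
  have g₃ := gap 2 3 (by decide)
  have g₄ := gap 3 4 (by decide)
  have g₅ := gap 4 5 (by decide)
  refine ⟨by rw [show b 2 - b 1 = π / 3 by linarith, cos_pi_div_three], ?_⟩
  exact cos_pos_of_mem_Ioo ⟨by linarith, by linarith⟩

theorem two_mul_le_norm_of_sq_eq {E : Type*} [SeminormedAddCommGroup E] {x : E} {r a : ℝ}
    (hr : 0 ≤ r) (hra : r ≤ a) (hx : ‖x‖ ^ 2 = 4 * r * a) : 2 * r ≤ ‖x‖ := by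
  nlinarith [norm_nonneg x]

section TangentPair

variable {r a b : ℝ} {x y : ℂ}

/-- Two horospheres tangent to a smallest horosphere of radius `r` (centred at `0`) and disjoint
from each other are seen from it at an angle of at least `π / 3`. -/
theorem cos_arg_sub_le_half_of_tangent (hr : 0 < r) (hra : r ≤ a) (hrb : r ≤ b)
    (hx : ‖x‖ ^ 2 = 4 * r * a) (hy : ‖y‖ ^ 2 = 4 * r * b) (hxy : 4 * a * b ≤ ‖x - y‖ ^ 2) :
    Real.cos (arg x - arg y) ≤ 1 / 2 := by
  have hinner := two_inner_le_of_tangent hra hrb hx hy hxy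
  rw [Complex.real_inner_eq_norm_mul_norm_mul_cos_arg_sub] at hinner
  have hnx := two_mul_le_norm_of_sq_eq hr.le hra hx
  have hny := two_mul_le_norm_of_sq_eq hr.le hrb hy
  have hN : 4 * r ^ 2 ≤ ‖x‖ * ‖y‖ := by nlinarith
  by_contra! h
  nlinarith [mul_lt_mul_of_pos_left h (show 0 < ‖x‖ * ‖y‖ by nlinarith)]

theorem eq_of_cos_arg_sub_eq_half_of_tangent (hr : 0 < r) (hra : r ≤ a) (hrb : r ≤ b)
    (hx : ‖x‖ ^ 2 = 4 * r * a) (hy : ‖y‖ ^ 2 = 4 * r * b) (hxy : 4 * a * b ≤ ‖x - y‖ ^ 2)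
    (hcos : Real.cos (arg x - arg y) = 1 / 2) : a = r := by
  have hinner := two_inner_le_of_tangent hra hrb hx hy hxy
  rw [Complex.real_inner_eq_norm_mul_norm_mul_cos_arg_sub, hcos] at hinner
  have hnx := two_mul_le_norm_of_sq_eq hr.le hra hx
  have hny := two_mul_le_norm_of_sq_eq hr.le hrb hy
  have hx2 : ‖x‖ = 2 * r := le_antisymm (by nlinarith) hnx
  rw [hx2] at hx
  nlinarith

end TangentPair

theorem false_of_six_tangent_neighbours {r : ℝ} (hr : 0 < r) {q : Fin 6 → ℂ} {R : Fin 6 → ℝ}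
    (hge : ∀ k, r ≤ R k) (htan : ∀ k, ‖q k‖ ^ 2 = 4 * r * R k)
    (hsep : Pairwise fun k l => 4 * R k * R l ≤ ‖q k - q l‖ ^ 2)
    (hre : ∀ k, R k = r → (q k).re ≤ 0) : False := by
  set σ := Tuple.sort fun k => arg (q k)
  have hsep' : ∀ {k l}, k ≠ l → 4 * R (σ k) * R (σ l) ≤ ‖q (σ k) - q (σ l)‖ ^ 2 :=
    fun hkl => hsep (σ.injective.ne hkl)
  obtain ⟨hhalf, hpos⟩ := cos_pos_of_hexagon (b := fun k => arg (q (σ k)))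
    (Tuple.monotone_sort fun k => arg (q k))
    (Complex.neg_pi_lt_arg _) (arg_le_pi _) fun k l hkl =>
      cos_arg_sub_le_half_of_tangent hr (hge _) (hge _) (htan _) (htan _) (hsep' hkl.ne')
  have hR₂ : R (σ 2) = r := eq_of_cos_arg_sub_eq_half_of_tangent hr (hge _) (hge _) (htan _)
    (htan _) (hsep' (by decide)) hhalf
  have hnorm : 0 < ‖q (σ 2)‖ := by linarith [two_mul_le_norm_of_sq_eq hr.le (hge _) (htan (σ 2))]
  have := hre _ hR₂
  rw [← Complex.norm_mul_cos_arg] at this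
  exact (mul_pos hnorm hpos).not_ge this

theorem Finite.exists_min_then_max {ι α β : Type*} [Finite ι] [Nonempty ι] [LinearOrder α]
    [LinearOrder β] (f : ι → α) (g : ι → β) :
    ∃ i, ∀ j, f i ≤ f j ∧ (f j = f i → g j ≤ g i) := by
  obtain ⟨i, hi⟩ := Finite.exists_min fun j => toLex (f j, OrderDual.toDual (g j))
  exact ⟨i, fun j => by
    simpa [Prod.Lex.toLex_le_toLex', eq_comm] using hi j⟩

theorem ncard_tangent_le_five {ι : Type*} {z : ι → ℂ} {R : ι → ℝ} {i : ι} (hRi : 0 < R i)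
    (hsep : Pairwise fun j k => 4 * R j * R k ≤ ‖z j - z k‖ ^ 2) (hmin : ∀ j, R i ≤ R j)
    (hre : ∀ j, R j = R i → (z j).re ≤ (z i).re) :
    {j | j ≠ i ∧ ‖z j - z i‖ ^ 2 = 4 * R j * R i}.ncard ≤ 5 := by
  by_contra! h
  obtain ⟨t, hts, ht⟩ := Set.exists_subset_card_eq (show 6 ≤ _ from h)
  have : Finite t := Set.finite_of_ncard_pos (by omega)
  let e : Fin 6 ≃ t := (Finite.equivFinOfCardEq (by rw [Nat.card_coe_set_eq, ht])).symm
  have he : ∀ k, (e k : ι) ≠ i ∧ ‖z (e k) - z i‖ ^ 2 = 4 * R (e k) * R i := fun k => hts (e k).2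
  refine false_of_six_tangent_neighbours hRi (q := fun k => z (e k) - z i) (R := fun k => R (e k))
    (fun k => hmin _) (fun k => by rw [(he k).2]; ring) (fun k l hkl => ?_)
    (fun k hk => by simpa using hre _ hk)
  simpa using hsep fun h => hkl (e.injective (Subtype.ext h))

theorem ncard_ltPairs_succ_le {n : ℕ} {r : Fin (n + 1) → Fin (n + 1) → Prop}
    (hr : ∀ a b, r a b → r b a) (i : Fin (n + 1)) :
    (ltPairs r).ncard ≤
      {j | j ≠ i ∧ r j i}.ncard + (ltPairs fun a b => r (i.succAbove a) (i.succAbove b)).ncard := by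
  have hsub : ltPairs r ⊆ (fun j => (min i j, max i j)) '' {j | j ≠ i ∧ r j i} ∪
      Prod.map i.succAbove i.succAbove '' ltPairs fun a b => r (i.succAbove a) (i.succAbove b) := by
    rintro ⟨a, b⟩ ⟨hab, hrab⟩
    by_cases ha : a = i
    · subst ha
      exact .inl ⟨b, ⟨hab.ne', hr _ _ hrab⟩, by simp [hab.le]⟩
    by_cases hb : b = i
    · subst hb
      exact .inl ⟨a, ⟨hab.ne, hrab⟩, by simp [hab.le]⟩
    obtain ⟨a, rfl⟩ := Fin.exists_succAbove_eq ha
    obtain ⟨b, rfl⟩ := Fin.exists_succAbove_eq hb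
    exact .inr ⟨(a, b), ⟨Fin.succAbove_lt_succAbove_iff.mp hab, hrab⟩, rfl⟩
  calc _ ≤ _ := Set.ncard_le_ncard hsub (Set.toFinite _)
    _ ≤ _ := Set.ncard_union_le _ _
    _ ≤ _ := add_le_add (Set.ncard_image_le (Set.toFinite _)) (Set.ncard_image_le (Set.toFinite _))

theorem ncard_ltPairs_fin_five_le_nine {r : Fin 5 → Fin 5 → Prop} (hr : ∀ a b, r a b → r b a)
    (hnr : ¬ Pairwise r) : (ltPairs r).ncard ≤ 9 := by
  obtain ⟨i, j, hij, hnij⟩ : ∃ i j, i < j ∧ ¬ r i j := by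
    obtain ⟨i, j, hne, hn⟩ : ∃ i j, i ≠ j ∧ ¬ r i j := by simpa [Pairwise] using hnr
    rcases hne.lt_or_gt with h | h
    exacts [⟨i, j, h, hn⟩, ⟨j, i, h, fun h' => hn (hr _ _ h')⟩]
  have hsub : ltPairs r ⊆
      ↑((univ.filter fun q : Fin 5 × Fin 5 => q.1 < q.2).erase (i, j)) := by
    rintro q ⟨hq, hrq⟩
    simp only [coe_erase, coe_filter, mem_univ, true_and, Set.mem_sdiff, Set.mem_ofPred_eq,
      Set.mem_singleton_iff]
    exact ⟨hq, by rintro rfl; exact hnij hrq⟩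
  calc _ ≤ _ := Set.ncard_le_ncard hsub (Set.toFinite _)
    _ = 10 - 1 := by rw [Set.ncard_coe_finset, card_erase_of_mem (by simpa using hij)]; rfl

theorem ncard_tangent_pairs_le (n : ℕ) (hn : 5 ≤ n) (z : Fin n → ℂ) (R : Fin n → ℝ)
    (hR : ∀ i, 0 < R i) (hsep : Pairwise fun i j => 4 * R i * R j ≤ ‖z i - z j‖ ^ 2) :
    (ltPairs fun i j => ‖z i - z j‖ ^ 2 = 4 * R i * R j).ncard ≤ 5 * n - 16 := by
  have hsymm : ∀ {m} {z : Fin m → ℂ} {R : Fin m → ℝ} (i j : Fin m),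
      ‖z i - z j‖ ^ 2 = 4 * R i * R j → ‖z j - z i‖ ^ 2 = 4 * R j * R i := fun i j h => by
    rw [norm_sub_rev, h]; ring
  induction n, hn using Nat.le_induction with
  | base =>
    exact ncard_ltPairs_fin_five_le_nine hsymm
      (not_pairwise_tangent (by simp [Complex.finrank_real_complex]) z hR)
  | succ n hn ih =>
    obtain ⟨i, hi⟩ := Finite.exists_min_then_max R fun j => (z j).re
    have hdeg := ncard_tangent_le_five (hR i) hsep (fun j => (hi j).1) (fun j => (hi j).2)
    have hrest := ih (z ∘ i.succAbove) (R ∘ i.succAbove) (fun j => hR _)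
      fun j k hjk => hsep (Fin.succAbove_right_injective.ne hjk)
    calc _ ≤ _ := ncard_ltPairs_succ_le (hsymm (z := z) (R := R)) i
      _ ≤ 5 + (5 * n - 16) := add_le_add hdeg hrest
      _ = 5 * (n + 1) - 16 := by omega

theorem horosphere_packing_tangencies_le_general (n : ℕ) (hn : 5 ≤ n)
    (p : Fin n → EuclideanSpace ℝ (Fin 2)) (R : Fin n → ℝ)
    (hR : ∀ i, 0 < R i)
    (hsep : ∀ i j, i ≠ j → 4 * R i * R j ≤ ‖p i - p j‖ ^ 2) :
    Set.ncard {q : Fin n × Fin n | q.1 < q.2 ∧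
      ‖p q.1 - p q.2‖ ^ 2 = 4 * R q.1 * R q.2} ≤ 5 * n - 16 := by
  let f := Complex.orthonormalBasisOneI.repr.symm
  have hnorm : ∀ i j, ‖p i - p j‖ = ‖f (p i) - f (p j)‖ := fun i j => by
    rw [← map_sub, LinearIsometryEquiv.norm_map]
  simp only [hnorm] at hsep ⊢
  exact ncard_tangent_pairs_le n hn (fun i => f (p i)) R hR hsep

/-- Any packing of `n ≥ 5` horospheres has at most `5n - 16`
tangencies. -/
theorem horosphere_packing_tangencies_le (n : ℕ) (hn : 5 ≤ n)
    (p : Fin n → EuclideanSpace ℝ (Fin 2)) (R : Fin n → ℝ)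
    (hR : ∀ i, 0 < R i)
    (hdist : Function.Injective (fun i => (p i, R i)))
    (hsep : ∀ i j, i ≠ j → 4 * R i * R j ≤ ‖p i - p j‖ ^ 2) :
    Set.ncard {q : Fin n × Fin n | q.1 < q.2 ∧
      ‖p q.1 - p q.2‖ ^ 2 = 4 * R q.1 * R q.2} ≤ 5 * n - 16 :=
  horosphere_packing_tangencies_le_general n hn p R hR hsep
end

section
/- Derivative of the solution of a linear ODE system with respect to a parameter: let d ≥ 1 and let A : ℝ × ℝ → Matrix (Fin d) (Fin d) ℂ, (λ, s) ↦ A_λ(s), be continuous with continuous partial derivative ∂A/∂λ. For each λ let Y_λ : [0,1] → Matrix (Fin d) (Fin d) ℂ be the solution of Y_λ'(s) = A_λ(s) · Y_λ(s) with Y_λ(0) = 1 (the identity matrix). Then each Y₀(s) is invertible, and the map λ ↦ Y_λ(1) is differentiable at λ = 0 with derivative Y₀(1) · ∫₀¹ Y₀(s)⁻¹ · (∂A/∂λ)(0, s) · Y₀(s) ds. -/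
attribute [local instance] Matrix.linftyOpNormedAddCommGroup Matrix.linftyOpNormedRing
  Matrix.linftyOpNormedSpace

/-!
Write `Z = Y₀⁻¹`; it solves `Z' = -Z A₀`, so differentiating `Z (Y_λ - Y₀)` gives the
variation-of-constants identity `Y_λ(s) - Y₀(s) = Y₀(s) ∫₀ˢ Z (A_λ - A₀) Y_λ`. Dividing by `λ`,
the integrand `Z · (A_λ - A₀)/λ · Y_λ` is bounded for `|λ| ≤ 1` (mean value theorem for `A`,
Grönwall for `Y_λ`) and converges pointwise to `Z (∂A/∂λ)(0) Y₀`, because the same identity gives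
`‖Y_λ - Y₀‖ = O(λ)`; bounded convergence yields the derivative.

Invertibility of `Y₀(s)`: if `Y₀(s) N = 0`, Grönwall run backwards in time along `t ↦ Y₀(t) N`
gives `N = Y₀(0) N = 0`, and a left-regular square matrix is invertible.
-/

open Set Filter Topology MeasureTheory

theorem tendsto_intervalIntegral_of_norm_le_const {E ι : Type*} [NormedAddCommGroup E]
    [NormedSpace ℝ E] {l : Filter ι} [l.IsCountablyGenerated] {F : ι → ℝ → E} {f : ℝ → E}
    {a b C : ℝ} (hF : ∀ᶠ i in l, ContinuousOn (F i) (uIcc a b))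
    (hC : ∀ᶠ i in l, ∀ t ∈ uIcc a b, ‖F i t‖ ≤ C)
    (hf : ∀ t ∈ uIcc a b, Tendsto (fun i => F i t) l (𝓝 (f t))) :
    Tendsto (fun i => ∫ t in a..b, F i t) l (𝓝 (∫ t in a..b, f t)) :=
  intervalIntegral.tendsto_integral_filter_of_dominated_convergence (fun _ => C)
    (hF.mono fun _ hi => (hi.mono uIoc_subset_uIcc).aestronglyMeasurable measurableSet_uIoc)
    (hC.mono fun _ hi => .of_forall fun t ht => hi t (uIoc_subset_uIcc ht))
    intervalIntegrable_const
    (.of_forall fun t ht => hf t (uIoc_subset_uIcc ht))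

theorem ContinuousOn.ringInverse {E X : Type*} [NormedRing E] [HasSummableGeomSeries E]
    [TopologicalSpace X] {f : X → E} {s : Set X} (hf : ContinuousOn f s)
    (hu : ∀ x ∈ s, IsUnit (f x)) :
    ContinuousOn (fun x => Ring.inverse (f x)) s := fun x hx => by
  obtain ⟨u, hu⟩ := hu x hx
  exact (hu ▸ NormedRing.inverse_continuousAt u).comp_continuousWithinAt (hf x hx)

section LinearODE

variable {E : Type*} [NormedRing E] [NormedAlgebra ℝ E]

theorem norm_le_mul_exp_of_hasDerivWithinAt_mul {Y A : ℝ → E} {a b K : ℝ}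
    (hY : ContinuousOn Y (Icc a b))
    (hY' : ∀ t ∈ Ico a b, HasDerivWithinAt Y (A t * Y t) (Ici t) t)
    (hA : ∀ t ∈ Ico a b, ‖A t‖ ≤ K) :
    ∀ t ∈ Icc a b, ‖Y t‖ ≤ ‖Y a‖ * Real.exp (K * (t - a)) := by
  intro t ht
  have hbound : ∀ s ∈ Ico a b, ‖A s * Y s‖ ≤ K * ‖Y s‖ + 0 := fun s hs => by
    rw [add_zero]
    exact (norm_mul_le _ _).trans (mul_le_mul_of_nonneg_right (hA s hs) (norm_nonneg _))
  simpa only [gronwallBound_ε0] using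
    norm_le_gronwallBound_of_norm_deriv_right_le hY hY' le_rfl hbound t ht

theorem mul_eq_zero_of_hasDerivAt_mul {Y A : ℝ → E} {a b : ℝ} (hab : a ≤ b)
    (hY : ∀ t ∈ Icc a b, HasDerivAt Y (A t * Y t) t) (hA : ContinuousOn A (Icc a b))
    {N : E} (hN : Y b * N = 0) : Y a * N = 0 := by
  obtain ⟨K, hK⟩ := isCompact_Icc.exists_bound_of_continuousOn hA
  have hrefl : ∀ t ∈ Icc a b, a + b - t ∈ Icc a b := fun t ht =>
    ⟨by linarith [ht.2], by linarith [ht.1]⟩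
  have hback : ∀ t ∈ Icc a b, HasDerivAt (fun t => Y (a + b - t) * N)
      (-A (a + b - t) * (Y (a + b - t) * N)) t := fun t ht => by
    have := ((hY _ (hrefl t ht)).scomp t ((hasDerivAt_id t).const_sub (a + b))).mul_const N
    simpa [neg_mul, mul_assoc] using this
  have := norm_le_mul_exp_of_hasDerivWithinAt_mul (K := K)
    (fun t ht => (hback t ht).continuousAt.continuousWithinAt)
    (fun t ht => (hback t (Ico_subset_Icc_self ht)).hasDerivWithinAt)
    (fun t ht => (norm_neg _).trans_le (hK _ (hrefl t (Ico_subset_Icc_self ht)))) b ⟨hab, le_rfl⟩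
  simpa [hN] using this

theorem isUnit_of_hasDerivAt_mul [IsArtinianRing Eᵐᵒᵖ] {Y A : ℝ → E} {a b : ℝ}
    (hY : ∀ t ∈ Icc a b, HasDerivAt Y (A t * Y t) t) (hA : ContinuousOn A (Icc a b))
    (ha : IsUnit (Y a)) : ∀ t ∈ Icc a b, IsUnit (Y t) := by
  intro t ht
  refine IsArtinianRing.isUnit_iff_isLeftRegular.2 <|
    isLeftRegular_iff_right_eq_zero_of_mul.2 fun N hN => ?_
  have hsub : Icc a t ⊆ Icc a b := Icc_subset_Icc_right ht.2
  exact ha.mul_right_eq_zero.1 <|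
    mul_eq_zero_of_hasDerivAt_mul ht.1 (fun s hs => hY s (hsub hs)) (hA.mono hsub) hN


theorem HasDerivAt.ringInverse [HasSummableGeomSeries E] {Y : ℝ → E} {Y' : E} {t : ℝ}
    (hY : HasDerivAt Y Y' t)
    (ht : IsUnit (Y t)) :
    HasDerivAt (fun s => Ring.inverse (Y s))
      (-(Ring.inverse (Y t) * Y' * Ring.inverse (Y t))) t := by
  obtain ⟨u, hu⟩ := ht
  have hinv := hasFDerivAt_ringInverse (𝕜 := ℝ) u
  rw [hu] at hinv
  refine (hinv.comp_hasDerivAt t hY).congr_deriv ?_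
  simp [← hu]

theorem sub_eq_mul_integral_of_hasDerivAt_mul [CompleteSpace E] {Y W Z A B : ℝ → E} {a b : ℝ}
    (hY : ∀ t ∈ uIcc a b, HasDerivAt Y (A t * Y t) t)
    (hW : ∀ t ∈ uIcc a b, HasDerivAt W (B t * W t) t)
    (hZ : ∀ t ∈ uIcc a b, HasDerivAt Z (-(Z t * A t)) t)
    (hint : IntervalIntegrable (fun t => Z t * (B t - A t) * W t) volume a b)
    (ha : W a = Y a) (hb : Y b * Z b = 1) :
    W b - Y b = Y b * ∫ t in a..b, Z t * (B t - A t) * W t := by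
  have hderiv : ∀ t ∈ uIcc a b,
      HasDerivAt (fun s => Z s * (W s - Y s)) (Z t * (B t - A t) * W t) t := fun t ht =>
    ((hZ t ht).mul ((hW t ht).sub (hY t ht))).congr_deriv <| by
      simp only [Pi.sub_apply]; noncomm_ring
  rw [intervalIntegral.integral_eq_sub_of_hasDerivAt hderiv hint, ha, sub_self, mul_zero,
    sub_zero, ← mul_assoc, hb, one_mul]

section ParametricLinearODE

variable {E : Type*} [NormedRing E] [NormedAlgebra ℝ E] {A A' Y : ℝ → ℝ → E}

theorem exists_norm_sub_le_mul_abs_of_hasDerivAt {S : Set ℝ} (hS : IsCompact S)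
    (hA' : ∀ l s, HasDerivAt (fun l' => A l' s) (A' l s) l)
    (hA'c : Continuous fun q : ℝ × ℝ => A' q.1 q.2) :
    ∃ C, ∀ l ∈ Icc (-1 : ℝ) 1, ∀ s ∈ S, ‖A l s - A 0 s‖ ≤ C * |l| := by
  obtain ⟨C, hC⟩ := (isCompact_Icc.prod hS).exists_bound_of_continuousOn hA'c.continuousOn
  refine ⟨C, fun l hl s hs => ?_⟩
  simpa [Real.norm_eq_abs] using
    (convex_Icc (-1 : ℝ) 1).norm_image_sub_le_of_norm_hasDerivWithin_le
      (fun x _ => (hA' x s).hasDerivWithinAt) (fun x hx => hC (x, s) ⟨hx, hs⟩)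
      (x := 0) ⟨by norm_num, by norm_num⟩ hl

theorem exists_norm_solution_le (hA : Continuous fun q : ℝ × ℝ => A q.1 q.2)
    (hY0 : ∀ l, Y l 0 = 1)
    (hY : ∀ l, ∀ s ∈ Icc (0 : ℝ) 1, HasDerivAt (Y l) (A l s * Y l s) s) :
    ∃ C, ∀ l ∈ Icc (-1 : ℝ) 1, ∀ s ∈ Icc (0 : ℝ) 1, ‖Y l s‖ ≤ C := by
  obtain ⟨K, hK⟩ := (isCompact_Icc.prod isCompact_Icc).exists_bound_of_continuousOn
    (s := Icc (-1 : ℝ) 1 ×ˢ Icc (0 : ℝ) 1) hA.continuousOn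
  refine ⟨‖(1 : E)‖ * Real.exp |K|, fun l hl s hs => ?_⟩
  have hgron := norm_le_mul_exp_of_hasDerivWithinAt_mul (K := K)
    (fun t ht => (hY l t ht).continuousAt.continuousWithinAt)
    (fun t ht => (hY l t (Ico_subset_Icc_self ht)).hasDerivWithinAt)
    (fun t ht => hK (l, t) ⟨hl, Ico_subset_Icc_self ht⟩) s hs
  rw [hY0, sub_zero] at hgron
  refine hgron.trans (mul_le_mul_of_nonneg_left (Real.exp_le_exp.2 ?_) (norm_nonneg _))
  nlinarith [le_abs_self K, abs_nonneg K, hs.1, hs.2]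

variable [CompleteSpace E]

theorem solution_sub_eq_mul_integral (hA : Continuous fun q : ℝ × ℝ => A q.1 q.2)
    (hY0 : ∀ l, Y l 0 = 1)
    (hY : ∀ l, ∀ s ∈ Icc (0 : ℝ) 1, HasDerivAt (Y l) (A l s * Y l s) s)
    (hunit : ∀ s ∈ Icc (0 : ℝ) 1, IsUnit (Y 0 s)) (l : ℝ) {s : ℝ} (hs : s ∈ Icc (0 : ℝ) 1) :
    Y l s - Y 0 s = Y 0 s * ∫ t in (0 : ℝ)..s, Ring.inverse (Y 0 t) * (A l t - A 0 t) * Y l t := by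
  have hsub : uIcc 0 s ⊆ Icc (0 : ℝ) 1 := by
    rw [uIcc_of_le hs.1]; exact Icc_subset_Icc_right hs.2
  have hAc : ∀ l, Continuous (A l) := fun l => hA.comp (continuous_const.prodMk continuous_id)
  have hYc : ∀ l, ContinuousOn (Y l) (Icc (0 : ℝ) 1) :=
    fun l t ht => (hY l t ht).continuousAt.continuousWithinAt
  refine sub_eq_mul_integral_of_hasDerivAt_mul (fun t ht => hY 0 t (hsub ht))
    (fun t ht => hY l t (hsub ht)) (fun t ht => ?_) ?_ (by rw [hY0, hY0])
    (Ring.mul_inverse_cancel _ (hunit s hs))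
  · refine ((hY 0 t (hsub ht)).ringInverse (hunit t (hsub ht))).congr_deriv ?_
    rw [mul_assoc, mul_assoc, Ring.mul_inverse_cancel _ (hunit t (hsub ht)), mul_one]
  · refine ContinuousOn.intervalIntegrable (ContinuousOn.mono ?_ hsub)
    exact (((hYc 0).ringInverse hunit).mul ((hAc l).sub (hAc 0)).continuousOn).mul (hYc l)

theorem exists_norm_solution_sub_le_mul_abs (hA : Continuous fun q : ℝ × ℝ => A q.1 q.2)
    (hA' : ∀ l s, HasDerivAt (fun l' => A l' s) (A' l s) l)
    (hA'c : Continuous fun q : ℝ × ℝ => A' q.1 q.2)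
    (hY0 : ∀ l, Y l 0 = 1)
    (hY : ∀ l, ∀ s ∈ Icc (0 : ℝ) 1, HasDerivAt (Y l) (A l s * Y l s) s)
    (hunit : ∀ s ∈ Icc (0 : ℝ) 1, IsUnit (Y 0 s)) :
    ∃ M, ∀ l ∈ Icc (-1 : ℝ) 1, ∀ s ∈ Icc (0 : ℝ) 1, ‖Y l s - Y 0 s‖ ≤ M * |l| := by
  obtain ⟨CA, hCA⟩ := exists_norm_sub_le_mul_abs_of_hasDerivAt isCompact_Icc hA' hA'c
  obtain ⟨CY, hCY⟩ := exists_norm_solution_le hA hY0 hY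
  obtain ⟨CZ, hCZ⟩ := isCompact_Icc.exists_bound_of_continuousOn <|
    ContinuousOn.ringInverse (fun t ht => (hY 0 t ht).continuousAt.continuousWithinAt) hunit
  have h01 : (0 : ℝ) ∈ Icc (0 : ℝ) 1 := ⟨le_rfl, zero_le_one⟩
  have hCY0 : 0 ≤ CY := (norm_nonneg _).trans (hCY 0 ⟨by norm_num, by norm_num⟩ 0 h01)
  have hCZ0 : 0 ≤ CZ := (norm_nonneg _).trans (hCZ 0 h01)
  have hCA0 : 0 ≤ CA := by simpa using (norm_nonneg _).trans (hCA 1 ⟨by norm_num, le_rfl⟩ 0 h01)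
  refine ⟨CY * (CZ * CA * CY), fun l hl s hs => ?_⟩
  have hsub : uIoc 0 s ⊆ Icc (0 : ℝ) 1 := by
    rw [uIoc_of_le hs.1]; exact Ioc_subset_Icc_self.trans (Icc_subset_Icc_right hs.2)
  have hint : ‖∫ t in (0 : ℝ)..s, Ring.inverse (Y 0 t) * (A l t - A 0 t) * Y l t‖
      ≤ CZ * (CA * |l|) * CY * |s - 0| :=
    intervalIntegral.norm_integral_le_of_norm_le_const fun t ht => norm_mul₃_le.trans <| by
      gcongr
      exacts [hCZ t (hsub ht), hCA l hl t (hsub ht), hCY l hl t (hsub ht)]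
  have hs1 : |s - 0| ≤ 1 := by rw [sub_zero, abs_of_nonneg hs.1]; exact hs.2
  rw [solution_sub_eq_mul_integral hA hY0 hY hunit l hs]
  calc ‖Y 0 s * ∫ t in (0 : ℝ)..s, Ring.inverse (Y 0 t) * (A l t - A 0 t) * Y l t‖
      ≤ CY * (CZ * (CA * |l|) * CY * |s - 0|) :=
        (norm_mul_le _ _).trans (mul_le_mul (hCY 0 ⟨by norm_num, by norm_num⟩ s hs) hint
          (norm_nonneg _) hCY0)
    _ = CY * (CZ * CA * CY) * |l| * |s - 0| := by ring
    _ ≤ CY * (CZ * CA * CY) * |l| := mul_le_of_le_one_right (by positivity) hs1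

theorem tendsto_solution_nhds_zero (hA : Continuous fun q : ℝ × ℝ => A q.1 q.2)
    (hA' : ∀ l s, HasDerivAt (fun l' => A l' s) (A' l s) l)
    (hA'c : Continuous fun q : ℝ × ℝ => A' q.1 q.2)
    (hY0 : ∀ l, Y l 0 = 1)
    (hY : ∀ l, ∀ s ∈ Icc (0 : ℝ) 1, HasDerivAt (Y l) (A l s * Y l s) s)
    (hunit : ∀ s ∈ Icc (0 : ℝ) 1, IsUnit (Y 0 s)) {s : ℝ} (hs : s ∈ Icc (0 : ℝ) 1) :
    Tendsto (fun l => Y l s) (𝓝 0) (𝓝 (Y 0 s)) := by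
  obtain ⟨M, hM⟩ := exists_norm_solution_sub_le_mul_abs hA hA' hA'c hY0 hY hunit
  have hlim : Tendsto (fun l : ℝ => M * |l|) (𝓝 0) (𝓝 0) := by
    simpa using (continuous_abs.tendsto (0 : ℝ)).const_mul M
  refine tendsto_iff_norm_sub_tendsto_zero.2 (squeeze_zero' (.of_forall fun _ => norm_nonneg _)
    ?_ hlim)
  filter_upwards [Icc_mem_nhds (by norm_num : (-1 : ℝ) < 0) (by norm_num : (0 : ℝ) < 1)]
    with l hl using hM l hl s hs

theorem hasDerivAt_solution_of_isUnit (hA : Continuous fun q : ℝ × ℝ => A q.1 q.2)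
    (hA' : ∀ l s, HasDerivAt (fun l' => A l' s) (A' l s) l)
    (hA'c : Continuous fun q : ℝ × ℝ => A' q.1 q.2)
    (hY0 : ∀ l, Y l 0 = 1)
    (hY : ∀ l, ∀ s ∈ Icc (0 : ℝ) 1, HasDerivAt (Y l) (A l s * Y l s) s)
    (hunit : ∀ s ∈ Icc (0 : ℝ) 1, IsUnit (Y 0 s)) :
    HasDerivAt (fun l => Y l 1)
      (Y 0 1 * ∫ s in (0 : ℝ)..1, Ring.inverse (Y 0 s) * A' 0 s * Y 0 s) 0 := by
  have hYc : ∀ l, ContinuousOn (Y l) (Icc (0 : ℝ) 1) :=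
    fun l t ht => (hY l t ht).continuousAt.continuousWithinAt
  have hAc : ∀ l, Continuous (A l) := fun l => hA.comp (continuous_const.prodMk continuous_id)
  obtain ⟨CA, hCA⟩ :=
    exists_norm_sub_le_mul_abs_of_hasDerivAt (isCompact_Icc (a := 0) (b := 1)) hA' hA'c
  obtain ⟨CY, hCY⟩ := exists_norm_solution_le hA hY0 hY
  obtain ⟨CZ, hCZ⟩ := isCompact_Icc.exists_bound_of_continuousOn ((hYc 0).ringInverse hunit)
  have hslope : ∀ l, slope (fun l => Y l 1) 0 l = Y 0 1 *
      ∫ t in (0 : ℝ)..1, Ring.inverse (Y 0 t) * slope (fun l => A l t) 0 l * Y l t := fun l => by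
    simp_rw [slope_def_module,
      solution_sub_eq_mul_integral hA hY0 hY hunit l ⟨zero_le_one, le_rfl⟩, ← mul_smul_comm,
      ← intervalIntegral.integral_smul, mul_smul_comm, smul_mul_assoc]
  rw [hasDerivAt_iff_tendsto_slope, funext hslope]
  refine Tendsto.const_mul (Y 0 1) (tendsto_intervalIntegral_of_norm_le_const
    (C := CZ * CA * CY) (.of_forall fun l => ?_) ?_ fun t ht => ?_)
  · rw [uIcc_of_le zero_le_one]
    exact (((hYc 0).ringInverse hunit).mul
      (((hAc l).sub (hAc 0)).const_smul _).continuousOn).mul (hYc l)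
  · filter_upwards [self_mem_nhdsWithin,
      nhdsWithin_le_nhds (Icc_mem_nhds (by norm_num : (-1 : ℝ) < 0) (by norm_num : (0 : ℝ) < 1))]
      with l (hl0 : l ≠ 0) hl t ht
    rw [uIcc_of_le zero_le_one] at ht
    have hslope_le : ‖slope (fun l => A l t) 0 l‖ ≤ CA := by
      rw [slope_def_module, sub_zero, norm_smul, norm_inv, Real.norm_eq_abs,
        inv_mul_le_iff₀ (abs_pos.2 hl0), mul_comm]
      exact hCA l hl t ht
    have hCZ0 : 0 ≤ CZ := (norm_nonneg _).trans (hCZ t ht)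
    have hCA0 : 0 ≤ CA := (norm_nonneg _).trans hslope_le
    exact norm_mul₃_le.trans <| mul_le_mul (mul_le_mul (hCZ t ht) hslope_le (norm_nonneg _) hCZ0)
      (hCY l hl t ht) (norm_nonneg _) (mul_nonneg hCZ0 hCA0)
  · rw [uIcc_of_le zero_le_one] at ht
    exact (((hasDerivAt_iff_tendsto_slope.1 (hA' 0 t)).const_mul _).mul
      ((tendsto_solution_nhds_zero hA hA' hA'c hY0 hY hunit ht).mono_left nhdsWithin_le_nhds))

end ParametricLinearODE

attribute [local instance] Matrix.linftyOpNormedAlgebra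

theorem hasDerivAt_solution_wrt_parameter_general (d : ℕ)
    (A A' : ℝ → ℝ → Matrix (Fin d) (Fin d) ℂ)
    (hA : Continuous fun q : ℝ × ℝ => A q.1 q.2)
    (hA' : ∀ l s : ℝ, HasDerivAt (fun l' => A l' s) (A' l s) l)
    (hA'cont : Continuous fun q : ℝ × ℝ => A' q.1 q.2)
    (Y : ℝ → ℝ → Matrix (Fin d) (Fin d) ℂ)
    (hY0 : ∀ l, Y l 0 = 1)
    (hY : ∀ l : ℝ, ∀ s ∈ Set.Icc (0:ℝ) 1, HasDerivAt (Y l) (A l s * Y l s) s) :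
    (∀ s ∈ Set.Icc (0:ℝ) 1, IsUnit (Y 0 s)) ∧
    HasDerivAt (fun l => Y l 1)
      (Y 0 1 * ∫ s in (0:ℝ)..1, (Y 0 s)⁻¹ * A' 0 s * Y 0 s) 0 := by
  have hunit : ∀ s ∈ Icc (0 : ℝ) 1, IsUnit (Y 0 s) :=
    isUnit_of_hasDerivAt_mul (hY 0) (hA.comp (continuous_const.prodMk continuous_id)).continuousOn
      (by rw [hY0]; exact isUnit_one)
  refine ⟨hunit, ?_⟩
  have hderiv := hasDerivAt_solution_of_isUnit hA hA' hA'cont hY0 hY hunit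
  simp only [← Matrix.nonsing_inv_eq_ringInverse] at hderiv
  exact hderiv

/-- derivative of the (principal) solution of a linear ODE system
with respect to a parameter. -/
theorem hasDerivAt_solution_wrt_parameter (d : ℕ) (hd : 1 ≤ d)
    (A A' : ℝ → ℝ → Matrix (Fin d) (Fin d) ℂ)
    (hA : Continuous fun q : ℝ × ℝ => A q.1 q.2)
    (hA' : ∀ l s : ℝ, HasDerivAt (fun l' => A l' s) (A' l s) l)
    (hA'cont : Continuous fun q : ℝ × ℝ => A' q.1 q.2)
    (Y : ℝ → ℝ → Matrix (Fin d) (Fin d) ℂ)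
    (hY0 : ∀ l, Y l 0 = 1)
    (hY : ∀ l : ℝ, ∀ s ∈ Set.Icc (0:ℝ) 1, HasDerivAt (Y l) (A l s * Y l s) s) :
    (∀ s ∈ Set.Icc (0:ℝ) 1, IsUnit (Y 0 s)) ∧
    HasDerivAt (fun l => Y l 1)
      (Y 0 1 * ∫ s in (0:ℝ)..1, (Y 0 s)⁻¹ * A' 0 s * Y 0 s) 0 :=
  hasDerivAt_solution_wrt_parameter_general d A A' hA hA' hA'cont Y hY0 hY
end LinearODE
end

section
/- Cauchy estimate on an annulus: let ρ > 1, 0 < t < 1, and c > 0. Let A be a matrix-valued function, continuous on the closed annulus {z ∈ ℂ : ρ⁻¹t ≤ |z| ≤ ρ} and holomorphic on its interior, such that the line integral of ‖A‖ over the circle |z| = ρ is at most c, and the line integral of ‖A‖ over the circle |z| = ρ⁻¹t is at most c·t. Then for every z with t ≤ |z| ≤ 1, ‖A(z)‖ ≤ (1/(2π)) · ( c/(ρ − 1) + c/(1 − ρ⁻¹) ). -/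
/-!
Cauchy's formula on an annulus writes `2πi A(w)` as the difference of the integrals of
`A(z)/(z - w)` over the outer and the inner boundary circle; it follows from the Cauchy–Goursat
theorem for the annulus applied to the difference quotient `dslope A w`. On the outer circle
`|z - w| ≥ ρ - 1` and on the inner one `|z - w| ≥ t - ρ⁻¹t = t (1 - ρ⁻¹)`, so each of the two
integrals is at most the given line integral of `‖A‖` divided by that distance.
-/

attribute [local instance] Matrix.linftyOpNormedAddCommGroup Matrix.linftyOpNormedRing
  Matrix.linftyOpNormedSpace

open Metric Set Real Complex

theorem closedBall_zero_sdiff_ball_zero {E : Type*} [SeminormedAddCommGroup E] (r R : ℝ) :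
    closedBall (0 : E) R \ ball 0 r = {z | r ≤ ‖z‖ ∧ ‖z‖ ≤ R} := by
  ext z
  simp only [mem_sdiff, mem_closedBall_zero_iff, mem_ball_zero_iff, not_lt, mem_ofPred_eq,
    and_comm]

theorem ball_zero_sdiff_closedBall_zero {E : Type*} [SeminormedAddCommGroup E] (r R : ℝ) :
    ball (0 : E) R \ closedBall 0 r = {z | r < ‖z‖ ∧ ‖z‖ < R} := by
  ext z
  simp only [mem_sdiff, mem_closedBall_zero_iff, mem_ball_zero_iff, not_le, mem_ofPred_eq,
    and_comm]

theorem sphere_subset_closedBall_sdiff_ball {X : Type*} [PseudoMetricSpace X] {x : X}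
    {r s R : ℝ} (hrs : r ≤ s) (hsR : s ≤ R) : sphere x s ⊆ closedBall x R \ ball x r :=
  fun _ hz => ⟨(mem_sphere.1 hz).trans_le hsR,
    fun hzr => (mem_ball.1 hzr).not_ge ((mem_sphere.1 hz).symm ▸ hrs)⟩

namespace Complex

variable {E : Type*} [NormedAddCommGroup E] [NormedSpace ℂ E]

theorem circleIntegral_sub_inv_eq_zero_of_notMem_closedBall {c w : ℂ} {r : ℝ} (hr : 0 ≤ r)
    (hw : w ∉ closedBall c r) : (∮ z in C(c, r), (z - w)⁻¹) = 0 := by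
  have hne : ∀ z ∈ closedBall c r, z - w ≠ 0 := fun z hz =>
    sub_ne_zero.2 (ne_of_mem_of_not_mem hz hw)
  refine DiffContOnCl.circleIntegral_eq_zero hr ?_
  exact ((differentiableOn_id.sub_const w).inv hne).diffContOnCl_ball subset_rfl

theorem circleIntegral_dslope [CompleteSpace E] {c w : ℂ} {R : ℝ} {f : ℂ → E} (hR : 0 ≤ R)
    (hw : w ∉ sphere c R) (hf : ContinuousOn f (sphere c R)) :
    (∮ z in C(c, R), dslope f w z) =
      (∮ z in C(c, R), (z - w)⁻¹ • f z) - (∮ z in C(c, R), (z - w)⁻¹) • f w := by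
  have hne : ∀ z ∈ sphere c R, z ≠ w := fun z hz => ne_of_mem_of_not_mem hz hw
  have hinv : ContinuousOn (fun z => (z - w)⁻¹) (sphere c R) :=
    (continuousOn_id.sub continuousOn_const).inv₀ fun z hz => sub_ne_zero.2 (hne z hz)
  have hslope : EqOn (dslope f w) (fun z => (z - w)⁻¹ • f z - (z - w)⁻¹ • f w) (sphere c R) :=
    fun z hz => by rw [dslope_of_ne _ (hne z hz), slope_def_module, smul_sub]
  have hint : CircleIntegrable (fun z => (z - w)⁻¹ • f z) c R :=
    (hinv.smul hf).circleIntegrable hR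
  have hint' : CircleIntegrable (fun z => (z - w)⁻¹ • f w) c R :=
    (hinv.smul continuousOn_const).circleIntegrable hR
  rw [circleIntegral.integral_congr hR hslope, circleIntegral.integral_sub hint hint',
    circleIntegral.integral_smul_const]

theorem circleIntegral_sub_inv_smul_of_differentiableOn_annulus [CompleteSpace E] {c w : ℂ}
    {r R : ℝ} {f : ℂ → E} (hr : 0 < r) (hw : w ∈ ball c R \ closedBall c r)
    (hc : ContinuousOn f (closedBall c R \ ball c r))
    (hd : DifferentiableOn ℂ f (ball c R \ closedBall c r)) :
    (∮ z in C(c, R), (z - w)⁻¹ • f z) - (∮ z in C(c, r), (z - w)⁻¹ • f z) =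
      (2 * π * I : ℂ) • f w := by
  have hopen : IsOpen (ball c R \ closedBall c r) := isOpen_ball.sdiff isClosed_closedBall
  have hsub : ball c R \ closedBall c r ⊆ closedBall c R \ ball c r :=
    sdiff_subset_sdiff ball_subset_closedBall ball_subset_closedBall
  have hwr : r < dist w c := by simpa using hw.2
  have hrR : r ≤ R := (hwr.trans (mem_ball.1 hw.1)).le
  have hcF : ContinuousOn (dslope f w) (closedBall c R \ ball c r) :=
    (continuousOn_dslope (Filter.mem_of_superset (hopen.mem_nhds hw) hsub)).2
      ⟨hc, hd.differentiableAt (hopen.mem_nhds hw)⟩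
  have hdF : ∀ z ∈ (ball c R \ closedBall c r) \ {w}, DifferentiableAt ℂ (dslope f w) z :=
    fun z hz => (differentiableAt_dslope_of_ne hz.2).2 (hd.differentiableAt (hopen.mem_nhds hz.1))
  have hgoursat := circleIntegral_eq_of_differentiable_on_annulus_off_countable hr hrR
    (countable_singleton w) hcF hdF
  have hwR : w ∉ sphere c R := ne_of_lt (mem_ball.1 hw.1)
  have hwr' : w ∉ sphere c r := ne_of_gt hwr
  rw [circleIntegral_dslope (hr.le.trans hrR) hwR
      (hc.mono (sphere_subset_closedBall_sdiff_ball hrR le_rfl)),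
    circleIntegral_dslope hr.le hwr' (hc.mono (sphere_subset_closedBall_sdiff_ball le_rfl hrR)),
    circleIntegral.integral_sub_inv_of_mem_ball hw.1,
    circleIntegral_sub_inv_eq_zero_of_notMem_closedBall hr.le hw.2, zero_smul,
    sub_zero] at hgoursat
  rw [← hgoursat, sub_sub_cancel]

theorem norm_circleIntegral_sub_inv_smul_le {c w : ℂ} {R δ : ℝ} {f : ℂ → E} (hR : 0 ≤ R)
    (hδ : 0 < δ) (hf : ContinuousOn f (sphere c R)) (hdist : ∀ z ∈ sphere c R, δ ≤ dist z w) :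
    ‖∮ z in C(c, R), (z - w)⁻¹ • f z‖ ≤ (∫ θ in 0..2 * π, ‖f (circleMap c R θ)‖ * R) / δ := by
  have hbound : ContinuousOn (fun θ => ‖f (circleMap c R θ)‖ * R / δ) (uIcc 0 (2 * π)) :=
    ((hf.comp (continuous_circleMap c R).continuousOn fun θ _ =>
      circleMap_mem_sphere c hR θ).norm.mul continuousOn_const).div_const δ
  rw [← intervalIntegral.integral_div]
  refine intervalIntegral.norm_integral_le_of_norm_le two_pi_pos.le
    (Filter.Eventually.of_forall fun θ _ => ?_) hbound.intervalIntegrable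
  have hz := circleMap_mem_sphere c hR θ
  rw [norm_smul, norm_smul, deriv_circleMap, norm_mul, norm_circleMap_zero, abs_of_nonneg hR,
    norm_I, mul_one, norm_inv, inv_mul_eq_div, mul_div_assoc', mul_comm R]
  exact div_le_div_of_nonneg_left (by positivity) hδ (dist_eq_norm _ w ▸ hdist _ hz)

theorem two_pi_mul_norm_le_of_differentiableOn_annulus [CompleteSpace E] {c w : ℂ} {r R : ℝ}
    {f : ℂ → E} (hr : 0 < r) (hw : w ∈ ball c R \ closedBall c r)
    (hc : ContinuousOn f (closedBall c R \ ball c r))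
    (hd : DifferentiableOn ℂ f (ball c R \ closedBall c r)) :
    2 * π * ‖f w‖ ≤ (∫ θ in 0..2 * π, ‖f (circleMap c R θ)‖ * R) / (R - dist w c) +
      (∫ θ in 0..2 * π, ‖f (circleMap c r θ)‖ * r) / (dist w c - r) := by
  have hwr : r < dist w c := by simpa using hw.2
  have hwR : dist w c < R := mem_ball.1 hw.1
  have hout := norm_circleIntegral_sub_inv_smul_le (w := w) (hr.le.trans (hwr.trans hwR).le)
    (sub_pos.2 hwR) (hc.mono (sphere_subset_closedBall_sdiff_ball (hwr.trans hwR).le le_rfl))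
    fun z hz => by linarith [dist_triangle z w c, mem_sphere.1 hz]
  have hin := norm_circleIntegral_sub_inv_smul_le (w := w) hr.le (sub_pos.2 hwr)
    (hc.mono (sphere_subset_closedBall_sdiff_ball le_rfl (hwr.trans hwR).le))
    fun z hz => by linarith [dist_triangle_left w c z, mem_sphere.1 hz]
  calc 2 * π * ‖f w‖ = ‖(2 * π * I : ℂ) • f w‖ := by
        rw [norm_smul, norm_mul, norm_I, mul_one, norm_mul, Complex.norm_two, norm_real,
          Real.norm_of_nonneg pi_pos.le]
    _ ≤ _ := circleIntegral_sub_inv_smul_of_differentiableOn_annulus hr hw hc hd ▸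
        (norm_sub_le _ _).trans (add_le_add hout hin)

end Complex

theorem cauchy_estimate_on_annulus_general (d : ℕ) (ρ t c : ℝ)
    (hρ : 1 < ρ) (ht0 : 0 < t) (hc : 0 < c)
    (A : ℂ → Matrix (Fin d) (Fin d) ℂ)
    (hcont : ContinuousOn A {z : ℂ | ρ⁻¹ * t ≤ ‖z‖ ∧ ‖z‖ ≤ ρ})
    (hholo : DifferentiableOn ℂ A
      {z : ℂ | ρ⁻¹ * t < ‖z‖ ∧ ‖z‖ < ρ})
    (houter : (∫ θ in (0:ℝ)..(2 * Real.pi),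
        ‖A ((ρ : ℂ) * Complex.exp (θ * Complex.I))‖ * ρ) ≤ c)
    (hinner : (∫ θ in (0:ℝ)..(2 * Real.pi),
        ‖A (((ρ⁻¹ * t : ℝ) : ℂ) * Complex.exp (θ * Complex.I))‖ * (ρ⁻¹ * t)) ≤ c * t) :
    ∀ z : ℂ, t ≤ ‖z‖ → ‖z‖ ≤ 1 →
      ‖A z‖ ≤ (1 / (2 * Real.pi)) * (c / (ρ - 1) + c / (1 - ρ⁻¹)) := by
  intro w htw hw1
  set r := ρ⁻¹ * t with hr_def
  have hr : 0 < r := by positivity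
  have hrt : r < t := mul_lt_of_lt_one_left ht0 (inv_lt_one_of_one_lt₀ hρ)
  have hw : w ∈ ball 0 ρ \ closedBall 0 r := by
    rw [ball_zero_sdiff_closedBall_zero]
    exact ⟨hrt.trans_le htw, hw1.trans_lt hρ⟩
  rw [← closedBall_zero_sdiff_ball_zero] at hcont
  rw [← ball_zero_sdiff_closedBall_zero] at hholo
  have hest := Complex.two_pi_mul_norm_le_of_differentiableOn_annulus hr hw hcont hholo
  simp only [circleMap, zero_add, dist_zero_right] at hest
  have hout := div_le_div₀ hc.le houter (sub_pos.2 hρ) (sub_le_sub_left hw1 ρ)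
  have hin := div_le_div₀ (mul_pos hc ht0).le hinner (sub_pos.2 hrt) (sub_le_sub_right htw r)
  rw [hr_def, ← one_sub_mul, mul_div_mul_right _ _ ht0.ne'] at hin
  rw [one_div_mul_eq_div, le_div_iff₀' two_pi_pos]
  exact hest.trans (add_le_add hout hin)

/-- Cauchy estimate on the annulus `ρ⁻¹ t ≤ |z| ≤ ρ` for a
holomorphic matrix-valued map whose norm has small line integrals on the two
boundary circles. -/
theorem cauchy_estimate_on_annulus (d : ℕ) (ρ t c : ℝ)
    (hρ : 1 < ρ) (ht0 : 0 < t) (ht1 : t < 1) (hc : 0 < c)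
    (A : ℂ → Matrix (Fin d) (Fin d) ℂ)
    (hcont : ContinuousOn A {z : ℂ | ρ⁻¹ * t ≤ ‖z‖ ∧ ‖z‖ ≤ ρ})
    (hholo : DifferentiableOn ℂ A
      {z : ℂ | ρ⁻¹ * t < ‖z‖ ∧ ‖z‖ < ρ})
    (houter : (∫ θ in (0:ℝ)..(2 * Real.pi),
        ‖A ((ρ : ℂ) * Complex.exp (θ * Complex.I))‖ * ρ) ≤ c)
    (hinner : (∫ θ in (0:ℝ)..(2 * Real.pi),
        ‖A (((ρ⁻¹ * t : ℝ) : ℂ) * Complex.exp (θ * Complex.I))‖ * (ρ⁻¹ * t)) ≤ c * t) :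
    ∀ z : ℂ, t ≤ ‖z‖ → ‖z‖ ≤ 1 →
      ‖A z‖ ≤ (1 / (2 * Real.pi)) * (c / (ρ - 1) + c / (1 - ρ⁻¹)) :=
  cauchy_estimate_on_annulus_general d ρ t c hρ ht0 hc A hcont hholo houter hinner
end

section
/- Uniform bound for solutions of Y' = AY on a thin annulus: let ρ > 1 and c, c' > 0. There exists a constant K, depending only on c, c', ρ (and the matrix size d), such that the following holds for every t ∈ (0,1): if A is a matrix-valued function, continuous on {ρ⁻¹t ≤ |z| ≤ ρ} and holomorphic on its interior, with line integral of ‖A‖ over |z| = ρ at most c and over |z| = ρ⁻¹t at most c·t, and if γ : [0,1] → {w ∈ ℂ : t ≤ |w| ≤ 1} is a C¹ path with γ(0) = 1 and length at most 1 + c', then the solution Y : [0,1] → Matrix (Fin d) (Fin d) ℂ of Y'(s) = A(γ(s)) γ'(s) Y(s) with Y(0) = 1 satisfies ‖Y(s)‖ ≤ K for all s ∈ [0,1]. -/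
/-!
For `t ≤ |z| ≤ 1`, Cauchy's formula on the annulus `ρ⁻¹ t < |w| < ρ` writes `2πi A z` as the
difference of the integrals of `A w / (w - z)` over the two boundary circles. The outer circle
is at distance at least `ρ - 1` from `z` and the inner one at distance at least `(1 - ρ⁻¹) t`,
so the two hypotheses on `∫ ‖A‖` give `2π ‖A z‖ ≤ c / (ρ - 1) + c / (1 - ρ⁻¹) =: 2π M`,
uniformly in `t`. Along `γ` the equation then gives `‖Y'‖ ≤ M ‖γ'‖ ‖Y‖`, and Grönwall's
inequality bounds `‖Y‖` by `‖Y 0‖ exp (M · length γ)`.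
-/

open Set Metric Filter Real Topology

section Annulus

variable {E : Type*} [NormedAddCommGroup E] [NormedSpace ℂ E]

theorem circleIntegral.norm_integral_sub_inv_smul_le {f : ℂ → E} {c z : ℂ} {R δ : ℝ}
    (hR : 0 ≤ R) (hδ : 0 < δ) (hf : ContinuousOn f (sphere c R))
    (hdist : ∀ w ∈ sphere c R, δ ≤ ‖w - z‖) :
    ‖∮ w in C(c, R), (w - z)⁻¹ • f w‖ ≤
      δ⁻¹ * ∫ θ in (0 : ℝ)..2 * π, ‖f (circleMap c R θ)‖ * R := by
  have hfθ : Continuous fun θ => f (circleMap c R θ) :=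
    hf.comp_continuous (continuous_circleMap c R) (circleMap_mem_sphere c hR)
  rw [← intervalIntegral.integral_const_mul]
  refine intervalIntegral.norm_integral_le_of_norm_le two_pi_pos.le
    (MeasureTheory.ae_of_all _ fun θ _ => ?_)
    ((continuous_const.mul (hfθ.norm.mul continuous_const)).intervalIntegrable _ _)
  have hw := circleMap_mem_sphere c hR θ
  rw [norm_smul, norm_smul, deriv_circleMap, norm_mul, norm_circleMap_zero, Complex.norm_I,
    abs_of_nonneg hR, norm_inv, mul_one]
  have := inv_anti₀ hδ (hdist _ hw)
  calc R * (‖circleMap c R θ - z‖⁻¹ * ‖f (circleMap c R θ)‖)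
      ≤ R * (δ⁻¹ * ‖f (circleMap c R θ)‖) := by gcongr
    _ = δ⁻¹ * (‖f (circleMap c R θ)‖ * R) := by ring

theorem circleIntegral.integral_dslope [CompleteSpace E] {f : ℂ → E} {c z : ℂ} {R : ℝ}
    (hR : 0 ≤ R) (hz : z ∉ sphere c R) (hf : ContinuousOn f (sphere c R)) :
    (∮ w in C(c, R), dslope f z w) =
      (∮ w in C(c, R), (w - z)⁻¹ • f w) - (∮ w in C(c, R), (w - z)⁻¹) • f z := by
  have hinv : ContinuousOn (fun w : ℂ => (w - z)⁻¹) (sphere c R) :=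
    (continuousOn_id.sub continuousOn_const).inv₀ fun w hw =>
      sub_ne_zero.2 (ne_of_mem_of_not_mem hw hz)
  have h₁ : CircleIntegrable (fun w => (w - z)⁻¹ • f w) c R := (hinv.smul hf).circleIntegrable hR
  have h₂ : CircleIntegrable (fun w => (w - z)⁻¹ • f z) c R :=
    (hinv.smul continuousOn_const).circleIntegrable hR
  rw [← circleIntegral.integral_smul_const, ← circleIntegral.integral_sub h₁ h₂]
  refine circleIntegral.integral_congr hR fun w hw => ?_
  rw [dslope_of_ne _ (ne_of_mem_of_not_mem hw hz), slope_def_module, smul_sub]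

theorem Complex.circleIntegral_sub_inv_smul_sub_of_differentiableOn_annulus [CompleteSpace E]
    {f : ℂ → E} {c z : ℂ} {r R : ℝ} (hr : 0 < r)
    (hcont : ContinuousOn f (closedBall c R \ ball c r))
    (hd : DifferentiableOn ℂ f (ball c R \ closedBall c r))
    (hz : z ∈ ball c R \ closedBall c r) :
    (∮ w in C(c, R), (w - z)⁻¹ • f w) - (∮ w in C(c, r), (w - z)⁻¹ • f w) =
      (2 * π * Complex.I : ℂ) • f z := by
  have hrR : r ≤ R := (not_le.1 (mem_closedBall.not.1 hz.2)).le.trans (mem_ball.1 hz.1).le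
  have hopen : ball c R \ closedBall c r ∈ 𝓝 z :=
    (isOpen_ball.sdiff isClosed_closedBall).mem_nhds hz
  have hclosed : closedBall c R \ ball c r ∈ 𝓝 z :=
    mem_of_superset hopen (sdiff_subset_sdiff ball_subset_closedBall ball_subset_closedBall)
  have hRz : z ∉ sphere c R := fun h => (mem_ball.1 hz.1).ne (mem_sphere.1 h)
  have hrz : z ∉ sphere c r := fun h => hz.2 (sphere_subset_closedBall h)
  have hsphR : sphere c R ⊆ closedBall c R \ ball c r :=
    fun w hw => ⟨sphere_subset_closedBall hw,
      fun h => (mem_ball.1 h).not_ge (hrR.trans_eq (mem_sphere.1 hw).symm)⟩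
  have hsphr : sphere c r ⊆ closedBall c R \ ball c r :=
    fun w hw => ⟨closedBall_subset_closedBall hrR (sphere_subset_closedBall hw),
      fun h => (mem_ball.1 h).ne (mem_sphere.1 hw)⟩
  have hcauchy := circleIntegral_eq_of_differentiable_on_annulus_off_countable hr hrR
    countable_empty ((continuousOn_dslope hclosed).2 ⟨hcont, hd.differentiableAt hopen⟩)
    fun w hw => ((differentiableOn_dslope hopen).2 hd).differentiableAt
      ((isOpen_ball.sdiff isClosed_closedBall).mem_nhds hw.1)
  have hzero : (∮ w in C(c, r), (w - z)⁻¹) = 0 :=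
    circleIntegral_eq_zero_of_differentiable_on_off_countable hr.le countable_empty
      ((continuousOn_id.sub continuousOn_const).inv₀ fun w hw =>
        sub_ne_zero.2 (ne_of_mem_of_not_mem hw hz.2))
      fun w hw => (differentiableAt_id.sub_const z).inv
        (sub_ne_zero.2 (ne_of_mem_of_not_mem (ball_subset_closedBall hw.1) hz.2))
  rw [circleIntegral.integral_dslope (hr.le.trans hrR) hRz (hcont.mono hsphR),
    circleIntegral.integral_dslope hr.le hrz (hcont.mono hsphr),
    circleIntegral.integral_sub_inv_of_mem_ball hz.1, hzero, zero_smul, sub_zero] at hcauchy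
  rw [← hcauchy, sub_sub_cancel]

theorem Complex.two_pi_mul_norm_le_of_differentiableOn_annulus_s15 [CompleteSpace E]
    {f : ℂ → E} {c z : ℂ} {r R : ℝ} (hr : 0 < r)
    (hcont : ContinuousOn f (closedBall c R \ ball c r))
    (hd : DifferentiableOn ℂ f (ball c R \ closedBall c r))
    (hz : z ∈ ball c R \ closedBall c r) :
    2 * π * ‖f z‖ ≤
      (R - dist z c)⁻¹ * (∫ θ in (0 : ℝ)..2 * π, ‖f (circleMap c R θ)‖ * R) +
        (dist z c - r)⁻¹ * ∫ θ in (0 : ℝ)..2 * π, ‖f (circleMap c r θ)‖ * r := by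
  have hzR : dist z c < R := hz.1
  have hzr : r < dist z c := not_le.1 hz.2
  have hnorm : ‖(2 * π * Complex.I : ℂ) • f z‖ = 2 * π * ‖f z‖ := by
    rw [norm_smul]; simp [pi_pos.le]
  rw [← hnorm,
    ← Complex.circleIntegral_sub_inv_smul_sub_of_differentiableOn_annulus hr hcont hd hz]
  refine (norm_sub_le _ _).trans (add_le_add ?_ ?_)
  · refine circleIntegral.norm_integral_sub_inv_smul_le (hr.le.trans (hzr.trans hzR).le)
      (sub_pos.2 hzR) (hcont.mono fun w hw => ⟨sphere_subset_closedBall hw, ?_⟩) fun w hw => ?_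
    · rw [mem_ball, not_lt, mem_sphere.1 hw]; exact (hzr.trans hzR).le
    · rw [← dist_eq_norm, ← mem_sphere.1 hw]; linarith [dist_triangle w z c]
  · refine circleIntegral.norm_integral_sub_inv_smul_le hr.le (sub_pos.2 hzr)
      (hcont.mono fun w hw => ⟨?_, ?_⟩) fun w hw => ?_
    · rw [mem_closedBall, mem_sphere.1 hw]; exact (hzr.trans hzR).le
    · rw [mem_ball, mem_sphere.1 hw]; exact lt_irrefl r
    · rw [← dist_eq_norm, ← mem_sphere.1 hw]; linarith [dist_triangle z w c, dist_comm z w]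

theorem norm_le_of_differentiableOn_thin_annulus [CompleteSpace E] {f : ℂ → E} {ρ c t : ℝ}
    (hρ : 1 < ρ) (ht : 0 < t) (hcont : ContinuousOn f {z : ℂ | ρ⁻¹ * t ≤ ‖z‖ ∧ ‖z‖ ≤ ρ})
    (hd : DifferentiableOn ℂ f {z : ℂ | ρ⁻¹ * t < ‖z‖ ∧ ‖z‖ < ρ})
    (hout : (∫ θ in (0:ℝ)..(2 * π), ‖f ((ρ : ℂ) * Complex.exp (θ * Complex.I))‖ * ρ) ≤ c)
    (hin : (∫ θ in (0:ℝ)..(2 * π),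
      ‖f (((ρ⁻¹ * t : ℝ) : ℂ) * Complex.exp (θ * Complex.I))‖ * (ρ⁻¹ * t)) ≤ c * t)
    {z : ℂ} (hzt : t ≤ ‖z‖) (hz1 : ‖z‖ ≤ 1) :
    ‖f z‖ ≤ (c / (ρ - 1) + c / (1 - ρ⁻¹)) / (2 * π) := by
  have hρ' : ρ⁻¹ < 1 := inv_lt_one_of_one_lt₀ hρ
  have hρt : ρ⁻¹ * t < t := mul_lt_of_lt_one_left ht hρ'
  have hr : 0 < ρ⁻¹ * t := by positivity
  have hcont' : ContinuousOn f (closedBall 0 ρ \ ball 0 (ρ⁻¹ * t)) := by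
    convert hcont using 1; ext; simp [and_comm]
  have hd' : DifferentiableOn ℂ f (ball 0 ρ \ closedBall 0 (ρ⁻¹ * t)) := by
    convert hd using 1; ext; simp [and_comm]
  have hz : z ∈ ball (0 : ℂ) ρ \ closedBall 0 (ρ⁻¹ * t) := by
    simp only [Set.mem_sdiff, mem_ball_zero_iff, mem_closedBall_zero_iff, not_le]
    exact ⟨hz1.trans_lt hρ, hρt.trans_le hzt⟩
  have key := Complex.two_pi_mul_norm_le_of_differentiableOn_annulus_s15 hr hcont' hd' hz
  simp only [dist_zero_right, circleMap, zero_add] at key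
  rw [le_div_iff₀ two_pi_pos, mul_comm]
  refine key.trans (add_le_add ?_ ?_)
  · have hI : 0 ≤ ∫ θ in (0:ℝ)..(2 * π), ‖f ((ρ : ℂ) * Complex.exp (θ * Complex.I))‖ * ρ :=
      intervalIntegral.integral_nonneg two_pi_pos.le fun θ _ =>
        mul_nonneg (norm_nonneg _) (zero_le_one.trans hρ.le)
    calc (ρ - ‖z‖)⁻¹ * _ ≤ (ρ - 1)⁻¹ * _ := by gcongr
      _ ≤ (ρ - 1)⁻¹ * c := by gcongr
      _ = c / (ρ - 1) := inv_mul_eq_div _ _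
  · have hI : 0 ≤ ∫ θ in (0:ℝ)..(2 * π),
        ‖f (((ρ⁻¹ * t : ℝ) : ℂ) * Complex.exp (θ * Complex.I))‖ * (ρ⁻¹ * t) :=
      intervalIntegral.integral_nonneg two_pi_pos.le fun θ _ => by positivity
    calc (‖z‖ - ρ⁻¹ * t)⁻¹ * _ ≤ (t - ρ⁻¹ * t)⁻¹ * _ := by gcongr
      _ ≤ (t - ρ⁻¹ * t)⁻¹ * (c * t) := by gcongr
      _ = c / (1 - ρ⁻¹) := by field_simp

end Annulus

theorem norm_le_mul_exp_integral_of_norm_deriv_right_le {E : Type*} [NormedAddCommGroup E]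
    [NormedSpace ℝ E] {f f' : ℝ → E} {k : ℝ → ℝ} {a b : ℝ} (hk : ContinuousOn k (Icc a b))
    (hf : ContinuousOn f (Icc a b)) (hf' : ∀ x ∈ Ico a b, HasDerivWithinAt f (f' x) (Ici x) x)
    (bound : ∀ x ∈ Ico a b, ‖f' x‖ ≤ k x * ‖f x‖) :
    ∀ x ∈ Icc a b, ‖f x‖ ≤ ‖f a‖ * exp (∫ y in a..x, k y) := by
  intro x hx
  have hab : a ≤ b := hx.1.trans hx.2
  set K : ℝ → ℝ := fun y => k (projIcc a b hab y)
  have hK : Continuous K := hk.comp_continuous (continuous_subtype_val.comp continuous_projIcc)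
    fun y => Subtype.mem _
  have hKk : ∀ y ∈ Icc a b, K y = k y := fun y hy => by simp [K, projIcc_of_mem hab hy]
  have hKx : ∫ y in a..x, K y = ∫ y in a..x, k y :=
    intervalIntegral.integral_congr fun y hy => by
      rw [uIcc_of_le hx.1] at hy
      exact hKk y ⟨hy.1, hy.2.trans hx.2⟩
  -- `(‖f a‖ + ε) * exp (∫ (K + ε))` is a strict upper fence for `‖f‖`; then let `ε → 0`.
  have hε : ∀ ε > 0, ‖f x‖ ≤ (‖f a‖ + ε) * exp ((∫ y in a..x, K y) + (x - a) * ε) := by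
    intro ε hε
    have hKε : Continuous fun y => K y + ε := hK.add continuous_const
    have hB : ∀ y, HasDerivAt (fun y => (‖f a‖ + ε) * exp (∫ u in a..y, (K u + ε)))
        ((‖f a‖ + ε) * (exp (∫ u in a..y, (K u + ε)) * (K y + ε))) y := fun y =>
      ((hKε.integral_hasStrictDerivAt a y).hasDerivAt.exp).const_mul _
    have := image_norm_le_of_norm_deriv_right_lt_deriv_boundary hf hf' (by simp; positivity) hB
      (fun y hy hfy => ?_) hx
    · rwa [intervalIntegral.integral_add (hK.intervalIntegrable _ _) intervalIntegrable_const,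
        intervalIntegral.integral_const, smul_eq_mul] at this
    · have hpos : 0 < (‖f a‖ + ε) * exp (∫ u in a..y, (K u + ε)) := by positivity
      calc ‖f' y‖ ≤ K y * ‖f y‖ := by
            rw [hKk y (Ico_subset_Icc_self hy)]; exact bound y hy
        _ < (K y + ε) * ‖f y‖ := by rw [hfy]; gcongr; linarith
        _ = _ := by rw [hfy]; ring
  have hcont : Continuous fun ε => (‖f a‖ + ε) * exp ((∫ y in a..x, K y) + (x - a) * ε) := by
    fun_prop
  have := ge_of_tendsto (hcont.tendsto 0 |>.mono_left (nhdsWithin_le_nhds (s := Ioi 0)))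
    (eventually_nhdsWithin_of_forall hε)
  simpa [hKx] using this

attribute [local instance] Matrix.linftyOpNormedAddCommGroup Matrix.linftyOpNormedRing
  Matrix.linftyOpNormedSpace

theorem uniform_bound_solution_on_annulus_general (d : ℕ) (ρ c c' : ℝ)
    (hρ : 1 < ρ) (hc : 0 < c) :
    ∃ K : ℝ, ∀ t : ℝ, 0 < t → t < 1 →
      ∀ A : ℂ → Matrix (Fin d) (Fin d) ℂ,
        ContinuousOn A {z : ℂ | ρ⁻¹ * t ≤ ‖z‖ ∧ ‖z‖ ≤ ρ} →
        DifferentiableOn ℂ A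
          {z : ℂ | ρ⁻¹ * t < ‖z‖ ∧ ‖z‖ < ρ} →
        (∫ θ in (0:ℝ)..(2 * Real.pi),
            ‖A ((ρ : ℂ) * Complex.exp (θ * Complex.I))‖ * ρ) ≤ c →
        (∫ θ in (0:ℝ)..(2 * Real.pi),
            ‖A (((ρ⁻¹ * t : ℝ) : ℂ) * Complex.exp (θ * Complex.I))‖ * (ρ⁻¹ * t))
          ≤ c * t →
        ∀ γ γ' : ℝ → ℂ,
          (∀ s ∈ Set.Icc (0:ℝ) 1, HasDerivAt γ (γ' s) s) →
          ContinuousOn γ' (Set.Icc (0:ℝ) 1) →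
          (∀ s ∈ Set.Icc (0:ℝ) 1, t ≤ ‖γ s‖ ∧ ‖γ s‖ ≤ 1) →
          γ 0 = 1 →
          (∫ s in (0:ℝ)..1, ‖γ' s‖) ≤ 1 + c' →
          ∀ Y : ℝ → Matrix (Fin d) (Fin d) ℂ,
            Y 0 = 1 →
            (∀ s ∈ Set.Icc (0:ℝ) 1, HasDerivAt Y (γ' s • (A (γ s) * Y s)) s) →
            ∀ s ∈ Set.Icc (0:ℝ) 1, ‖Y s‖ ≤ K := by
  set M := (c / (ρ - 1) + c / (1 - ρ⁻¹)) / (2 * π)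
  have hM : 0 ≤ M := by
    have := sub_pos.2 hρ
    have := sub_pos.2 (inv_lt_one_of_one_lt₀ hρ)
    positivity
  refine ⟨‖(1 : Matrix (Fin d) (Fin d) ℂ)‖ * exp (M * (1 + c')), ?_⟩
  intro t ht _ A hAc hAd hout hin γ γ' _ hγ'c hγt _ hlen Y hY0 hY s hs
  have hA : ∀ x ∈ Icc (0 : ℝ) 1, ‖A (γ x)‖ ≤ M := fun x hx =>
    norm_le_of_differentiableOn_thin_annulus hρ ht hAc hAd hout hin (hγt x hx).1 (hγt x hx).2
  have hY' : ∀ x ∈ Ico (0 : ℝ) 1, ‖γ' x • (A (γ x) * Y x)‖ ≤ M * ‖γ' x‖ * ‖Y x‖ :=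
    fun x hx => by
      have := hA x (Ico_subset_Icc_self hx)
      calc ‖γ' x • (A (γ x) * Y x)‖ ≤ ‖γ' x‖ * (‖A (γ x)‖ * ‖Y x‖) := by
            rw [norm_smul]; gcongr; exact norm_mul_le _ _
        _ ≤ M * ‖γ' x‖ * ‖Y x‖ := by rw [mul_comm M, mul_assoc]; gcongr
  have hlenM : ∫ x in (0 : ℝ)..s, M * ‖γ' x‖ ≤ M * (1 + c') :=
    calc ∫ x in (0 : ℝ)..s, M * ‖γ' x‖ ≤ ∫ x in (0 : ℝ)..1, M * ‖γ' x‖ :=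
          intervalIntegral.integral_mono_interval le_rfl hs.1 hs.2
            (MeasureTheory.ae_of_all _ fun x => by positivity)
            ((continuousOn_const.mul hγ'c.norm).intervalIntegrable_of_Icc zero_le_one)
      _ ≤ M * (1 + c') := by rw [intervalIntegral.integral_const_mul]; gcongr
  calc ‖Y s‖ ≤ ‖Y 0‖ * exp (∫ x in (0 : ℝ)..s, M * ‖γ' x‖) :=
        norm_le_mul_exp_integral_of_norm_deriv_right_le (continuousOn_const.mul hγ'c.norm)
          (fun x hx => (hY x hx).continuousAt.continuousWithinAt)
          (fun x hx => (hY x (Ico_subset_Icc_self hx)).hasDerivWithinAt) hY' s hs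
    _ ≤ ‖(1 : Matrix (Fin d) (Fin d) ℂ)‖ * exp (M * (1 + c')) := by rw [hY0]; gcongr

/-- uniform bound, independent of `t`, for solutions of `Y' = AY`
along paths in the thin annulus `ρ⁻¹ t ≤ |z| ≤ ρ`. -/
theorem uniform_bound_solution_on_annulus (d : ℕ) (ρ c c' : ℝ)
    (hρ : 1 < ρ) (hc : 0 < c) (hc' : 0 < c') :
    ∃ K : ℝ, ∀ t : ℝ, 0 < t → t < 1 →
      ∀ A : ℂ → Matrix (Fin d) (Fin d) ℂ,
        ContinuousOn A {z : ℂ | ρ⁻¹ * t ≤ ‖z‖ ∧ ‖z‖ ≤ ρ} →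
        DifferentiableOn ℂ A
          {z : ℂ | ρ⁻¹ * t < ‖z‖ ∧ ‖z‖ < ρ} →
        (∫ θ in (0:ℝ)..(2 * Real.pi),
            ‖A ((ρ : ℂ) * Complex.exp (θ * Complex.I))‖ * ρ) ≤ c →
        (∫ θ in (0:ℝ)..(2 * Real.pi),
            ‖A (((ρ⁻¹ * t : ℝ) : ℂ) * Complex.exp (θ * Complex.I))‖ * (ρ⁻¹ * t))
          ≤ c * t →
        ∀ γ γ' : ℝ → ℂ,
          (∀ s ∈ Set.Icc (0:ℝ) 1, HasDerivAt γ (γ' s) s) →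
          ContinuousOn γ' (Set.Icc (0:ℝ) 1) →
          (∀ s ∈ Set.Icc (0:ℝ) 1, t ≤ ‖γ s‖ ∧ ‖γ s‖ ≤ 1) →
          γ 0 = 1 →
          (∫ s in (0:ℝ)..1, ‖γ' s‖) ≤ 1 + c' →
          ∀ Y : ℝ → Matrix (Fin d) (Fin d) ℂ,
            Y 0 = 1 →
            (∀ s ∈ Set.Icc (0:ℝ) 1, HasDerivAt Y (γ' s • (A (γ s) * Y s)) s) →
            ∀ s ∈ Set.Icc (0:ℝ) 1, ‖Y s‖ ≤ K :=
  uniform_bound_solution_on_annulus_general d ρ c c' hρ hc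
end
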